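/- arXiv:1311.3692 — 4 statements merged into one kernel-verified Lean document; each statement's English description precedes it below -/
import Mathlib

section
/- Let a > 0, N ∈ ℕ, A an N×N real matrix, and M : [0,a) → Mat(N,ℝ) continuous with r·‖M(r)‖ = o(1) as r → 0⁺. Let λ be the smallest real number such that ⟨φ, Aφ⟩ ≤ λ‖φ‖² for all φ ∈ ℝᴺ. Suppose φ : (0,a) → ℝᴺ is differentiable, solves φ'(r) = r⁻¹·A·φ(r) + M(r)·φ(r), and satisfies φ(r) = O(r^{λ+ε}) as r → 0⁺ for some ε > 0. Then φ ≡ 0 on (0,a). -/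
/-!
Since `r‖M(r)‖ → 0`, on some interval `(0, b)` the inequality `⟨φ, Aφ⟩ ≤ λ‖φ‖²` gives
`(‖φ‖²)' ≤ (2λ + ε) r⁻¹ ‖φ‖²`, so `‖φ(r)‖² r^{-(2λ+ε)}` is nonincreasing there. By the growth
bound it is `O(r^ε)`, hence tends to `0` at `0⁺`; a nonnegative nonincreasing function with
limit `0` vanishes, so `φ = 0` on `(0, b)`. Away from the singularity the system is an ordinary
linear ODE with continuous coefficients, and uniqueness of its solutions propagates `φ = 0`
to all of `(0, a)`.
-/

open scoped RealInnerProductSpace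
open Set Filter Topology Asymptotics

theorem linear_ODE_solution_eqOn_zero {E : Type*} [NormedAddCommGroup E] [NormedSpace ℝ E]
    {L : ℝ → E →L[ℝ] E} {φ : ℝ → E} {t₀ t₁ : ℝ} (hL : ContinuousOn L (Icc t₀ t₁))
    (hφ : ∀ t ∈ Icc t₀ t₁, HasDerivAt φ (L t (φ t)) t) (h₀ : φ t₀ = 0) :
    EqOn φ 0 (Icc t₀ t₁) := by
  obtain ⟨K, hK⟩ := isCompact_Icc.exists_bound_of_continuousOn hL
  have hLip : ∀ t ∈ Ico t₀ t₁, LipschitzOnWith K.toNNReal (L t) univ := fun t ht =>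
    ((L t).lipschitz.weaken (by
      simpa only [norm_toNNReal] using
        Real.toNNReal_le_toNNReal (hK t (Ico_subset_Icc_self ht)))).lipschitzOnWith
  refine ODE_solution_unique_of_mem_Icc_right hLip (HasDerivAt.continuousOn hφ)
    (fun t ht => (hφ t (Ico_subset_Icc_self ht)).hasDerivWithinAt) (fun _ _ => trivial)
    continuousOn_const (fun t _ => ?_) (fun _ _ => trivial) h₀
  rw [Pi.zero_apply, map_zero]
  exact hasDerivWithinAt_const t (Ici t) 0

section InnerProductSpace

variable {E : Type*} [NormedAddCommGroup E] [InnerProductSpace ℝ E]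

theorem two_mul_real_inner_inv_smul_add_clm_le {A : E → E} {B : E →L[ℝ] E} {lam t δ : ℝ}
    (hA : ∀ x, ⟪x, A x⟫ ≤ lam * ‖x‖ ^ 2) (ht : 0 < t) (hB : t * ‖B‖ ≤ δ) (x : E) :
    2 * ⟪x, t⁻¹ • A x + B x⟫ ≤ (2 * lam + 2 * δ) / t * ‖x‖ ^ 2 := by
  have hBx : ⟪x, B x⟫ ≤ ‖B‖ * ‖x‖ ^ 2 :=
    calc ⟪x, B x⟫ ≤ ‖x‖ * ‖B x‖ := real_inner_le_norm _ _
      _ ≤ ‖x‖ * (‖B‖ * ‖x‖) := by gcongr; exact B.le_opNorm x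
      _ = ‖B‖ * ‖x‖ ^ 2 := by ring
  have hAx : t⁻¹ * ⟪x, A x⟫ ≤ t⁻¹ * (lam * ‖x‖ ^ 2) := by gcongr; exact hA x
  rw [inner_add_right, real_inner_smul_right]
  calc 2 * (t⁻¹ * ⟪x, A x⟫ + ⟪x, B x⟫) ≤ 2 * (t⁻¹ * (lam * ‖x‖ ^ 2) + ‖B‖ * ‖x‖ ^ 2) := by
        gcongr
    _ = (2 * lam + 2 * (t * ‖B‖)) / t * ‖x‖ ^ 2 := by field_simp
    _ ≤ (2 * lam + 2 * δ) / t * ‖x‖ ^ 2 := by gcongr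

variable {φ φ' : ℝ → E} {b c : ℝ}

theorem antitoneOn_norm_sq_mul_rpow_neg (hφ : ∀ t ∈ Ioo 0 b, HasDerivAt φ (φ' t) t)
    (hle : ∀ t ∈ Ioo 0 b, 2 * ⟪φ t, φ' t⟫ ≤ c / t * ‖φ t‖ ^ 2) :
    AntitoneOn (fun t => ‖φ t‖ ^ 2 * t ^ (-c)) (Ioo 0 b) := by
  have hderiv : ∀ t ∈ Ioo 0 b, HasDerivAt (fun t => ‖φ t‖ ^ 2 * t ^ (-c))
      (2 * ⟪φ t, φ' t⟫ * t ^ (-c) + ‖φ t‖ ^ 2 * (-c * t ^ (-c - 1))) t := fun t ht =>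
    (hφ t ht).norm_sq.mul (Real.hasDerivAt_rpow_const (Or.inl ht.1.ne'))
  refine antitoneOn_of_hasDerivWithinAt_nonpos (convex_Ioo 0 b) (HasDerivAt.continuousOn hderiv)
    (fun t ht => (hderiv t (interior_subset ht)).hasDerivWithinAt) fun t ht => ?_
  replace ht := interior_subset ht
  have hsplit : 2 * ⟪φ t, φ' t⟫ * t ^ (-c) + ‖φ t‖ ^ 2 * (-c * t ^ (-c - 1)) =
      t ^ (-c) * (2 * ⟪φ t, φ' t⟫ - c / t * ‖φ t‖ ^ 2) := by
    rw [Real.rpow_sub_one ht.1.ne']; ring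
  rw [hsplit]
  exact mul_nonpos_of_nonneg_of_nonpos (Real.rpow_nonneg ht.1.le _) (sub_nonpos.mpr (hle t ht))

theorem eqOn_zero_of_inner_deriv_le_of_tendsto (hφ : ∀ t ∈ Ioo 0 b, HasDerivAt φ (φ' t) t)
    (hle : ∀ t ∈ Ioo 0 b, 2 * ⟪φ t, φ' t⟫ ≤ c / t * ‖φ t‖ ^ 2)
    (hlim : Tendsto (fun t => ‖φ t‖ ^ 2 * t ^ (-c)) (𝓝[>] 0) (𝓝 0)) :
    EqOn φ 0 (Ioo 0 b) := by
  intro t ht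
  have hanti := antitoneOn_norm_sq_mul_rpow_neg hφ hle
  have hnonpos : ‖φ t‖ ^ 2 * t ^ (-c) ≤ 0 := by
    refine ge_of_tendsto hlim ?_
    filter_upwards [Ioo_mem_nhdsGT ht.1] with s hs
    exact hanti ⟨hs.1, hs.2.trans ht.2⟩ ht hs.2.le
  have hsq : ‖φ t‖ ^ 2 ≤ 0 := nonpos_of_mul_nonpos_left hnonpos (Real.rpow_pos_of_pos ht.1 _)
  simpa using hsq

end InnerProductSpace

theorem tendsto_norm_sq_mul_rpow_neg_of_isBigO {E : Type*} [NormedAddCommGroup E]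
    {φ : ℝ → E} {p c : ℝ} (hO : φ =O[𝓝[>] 0] fun t => t ^ p) (hc : c < 2 * p) :
    Tendsto (fun t => ‖φ t‖ ^ 2 * t ^ (-c)) (𝓝[>] 0) (𝓝 0) := by
  have hbig : (fun t => ‖φ t‖ ^ 2 * t ^ (-c)) =O[𝓝[>] 0] fun t => (t ^ p) ^ 2 * t ^ (-c) :=
    (hO.norm_left.pow 2).mul (isBigO_refl _ _)
  have heq : (fun t : ℝ => (t ^ p) ^ 2 * t ^ (-c)) =ᶠ[𝓝[>] 0] fun t => t ^ (2 * p - c) := by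
    filter_upwards [self_mem_nhdsWithin] with t (ht : 0 < t)
    rw [← Real.rpow_natCast, ← Real.rpow_mul ht.le, ← Real.rpow_add ht]
    ring_nf
  have hpos : 0 < 2 * p - c := sub_pos.mpr hc
  have hlim : Tendsto (fun t : ℝ => t ^ (2 * p - c)) (𝓝[>] 0) (𝓝 0) := by
    simpa [Real.zero_rpow hpos.ne'] using
      (Real.continuousAt_rpow_const 0 _ (Or.inr hpos.le)).tendsto.mono_left nhdsWithin_le_nhds
  exact (hbig.trans_eventuallyEq heq).trans_tendsto hlim

theorem fuchsian_ode_uniqueness_general {N : ℕ} {a : ℝ}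
    (A : EuclideanSpace ℝ (Fin N) →L[ℝ] EuclideanSpace ℝ (Fin N))
    (M : ℝ → (EuclideanSpace ℝ (Fin N) →L[ℝ] EuclideanSpace ℝ (Fin N)))
    (hMcont : ContinuousOn M (Set.Ico 0 a))
    (hMo : (fun r => r * ‖M r‖) =o[nhdsWithin 0 (Set.Ioi 0)] (fun _ => (1 : ℝ)))
    (lam : ℝ)
    (hlam : IsLeast {l : ℝ | ∀ φ : EuclideanSpace ℝ (Fin N), ⟪φ, A φ⟫ ≤ l * ‖φ‖ ^ 2} lam)
    (φ : ℝ → EuclideanSpace ℝ (Fin N))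
    (hφ : ∀ r ∈ Set.Ioo 0 a, HasDerivAt φ (r⁻¹ • A (φ r) + M r (φ r)) r)
    (ε : ℝ) (hε : 0 < ε)
    (hO : φ =O[nhdsWithin 0 (Set.Ioi 0)] fun r => r ^ (lam + ε)) :
    ∀ r ∈ Set.Ioo 0 a, φ r = 0 := by
  obtain ⟨b, hb, hMsmall⟩ := mem_nhdsGT_iff_exists_Ioo_subset.mp
    ((isLittleO_one_iff ℝ).mp hMo |>.eventually (eventually_le_nhds (half_pos hε)))
  have hle : ∀ t ∈ Ioo 0 (min b a), 2 * ⟪φ t, t⁻¹ • A (φ t) + M t (φ t)⟫ ≤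
      (2 * lam + 2 * (ε / 2)) / t * ‖φ t‖ ^ 2 := fun t ht =>
    two_mul_real_inner_inv_smul_add_clm_le hlam.1 ht.1
      (hMsmall ⟨ht.1, ht.2.trans_le (min_le_left b a)⟩) (φ t)
  have hnear : EqOn φ 0 (Ioo 0 (min b a)) :=
    eqOn_zero_of_inner_deriv_le_of_tendsto
      (fun t ht => hφ t ⟨ht.1, ht.2.trans_le (min_le_right b a)⟩) hle
      (tendsto_norm_sq_mul_rpow_neg_of_isBigO hO (by linarith))
  intro r hr
  have hb' : 0 < min b a := lt_min hb (hr.1.trans hr.2)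
  rcases lt_or_ge r (min b a) with hrb | hrb
  · exact hnear ⟨hr.1, hrb⟩
  have hIcc : Icc (min b a / 2) r ⊆ Ioo 0 a := fun t ht =>
    ⟨(half_pos hb').trans_le ht.1, ht.2.trans_lt hr.2⟩
  refine linear_ODE_solution_eqOn_zero (L := fun t => t⁻¹ • A + M t) ?_
    (fun t ht => by simpa using hφ t (hIcc ht)) (hnear ⟨half_pos hb', by linarith⟩)
    ⟨by linarith, le_rfl⟩
  exact ((continuousOn_inv₀.mono fun t ht => (hIcc ht).1.ne').smul continuousOn_const).add
    (hMcont.mono fun t ht => Ioo_subset_Ico_self (hIcc ht))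

/-- Fuchsian ODE lemma: a solution of the Fuchsian system
`φ' = r⁻¹ A φ + M(r) φ` on `(0,a)` which is `O(r^{λ+ε})` near `r = 0`, where `λ` is the
smallest number with `⟨φ, Aφ⟩ ≤ λ ‖φ‖²`, vanishes identically. -/
theorem fuchsian_ode_uniqueness {N : ℕ} {a : ℝ} (ha : 0 < a)
    (A : EuclideanSpace ℝ (Fin N) →L[ℝ] EuclideanSpace ℝ (Fin N))
    (M : ℝ → (EuclideanSpace ℝ (Fin N) →L[ℝ] EuclideanSpace ℝ (Fin N)))
    (hMcont : ContinuousOn M (Set.Ico 0 a))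
    (hMo : (fun r => r * ‖M r‖) =o[nhdsWithin 0 (Set.Ioi 0)] (fun _ => (1 : ℝ)))
    (lam : ℝ)
    (hlam : IsLeast {l : ℝ | ∀ φ : EuclideanSpace ℝ (Fin N), ⟪φ, A φ⟫ ≤ l * ‖φ‖ ^ 2} lam)
    (φ : ℝ → EuclideanSpace ℝ (Fin N))
    (hφ : ∀ r ∈ Set.Ioo 0 a, HasDerivAt φ (r⁻¹ • A (φ r) + M r (φ r)) r)
    (ε : ℝ) (hε : 0 < ε)
    (hO : φ =O[nhdsWithin 0 (Set.Ioi 0)] fun r => r ^ (lam + ε)) :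
    ∀ r ∈ Set.Ioo 0 a, φ r = 0 :=
  fuchsian_ode_uniqueness_general A M hMcont hMo lam hlam φ hφ ε hε hO
end

section
/- Let φ : (0,a) → ℝ be differentiable and satisfy the scalar Fuchsian ODE φ'(r) = λ·r⁻¹·φ(r) + m(r)·φ(r), where m : [0,a) → ℝ is continuous with r·m(r) → 0 as r → 0⁺. If φ(r) = O(r^{λ+ε}) as r → 0⁺ for some ε > 0, then φ is identically zero. -/
/-!
The integrating factor `exp (-(λ log r + ∫₀ʳ m))` turns the equation into
`(φ(r) r^{-λ} e^{-∫₀ʳ m})' = 0`, so `φ(r) r^{-λ} e^{-∫₀ʳ m}` is constant on `(0, a)`.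
Since `m` is continuous up to `0`, `e^{-∫₀ʳ m} → 1`, while the decay hypothesis gives
`φ(r) r^{-λ} = O(r^ε) → 0`; hence the constant is `0`.
-/

open Filter Set Topology Real intervalIntegral

theorem IsOpen.mul_exp_neg_eq_of_hasDerivAt {s : Set ℝ} (hs : IsOpen s)
    (hs' : IsPreconnected s) {φ p P : ℝ → ℝ} (hφ : ∀ x ∈ s, HasDerivAt φ (p x * φ x) x)
    (hP : ∀ x ∈ s, HasDerivAt P (p x) x) {x y : ℝ} (hx : x ∈ s) (hy : y ∈ s) :
    φ x * exp (-P x) = φ y * exp (-P y) := by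
  have hderiv : ∀ z ∈ s, HasDerivAt (fun z => φ z * exp (-P z)) 0 z := fun z hz => by
    have h : HasDerivAt (fun z => φ z * exp (-P z))
        (p z * φ z * exp (-P z) + φ z * (exp (-P z) * -p z)) z :=
      (hφ z hz).mul (hP z hz).neg.exp
    rwa [show p z * φ z * exp (-P z) + φ z * (exp (-P z) * -p z) = 0 by ring] at h
  exact hs.is_const_of_deriv_eq_zero hs'
    (fun z hz => (hderiv z hz).differentiableAt.differentiableWithinAt)
    (fun z hz => (hderiv z hz).deriv) hx hy

section Primitive

variable {m : ℝ → ℝ} {a b : ℝ}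

theorem ContinuousOn.hasDerivAt_integral_of_mem_Ioo (hm : ContinuousOn m (Ico b a)) {x : ℝ}
    (hx : x ∈ Ioo b a) : HasDerivAt (fun y => ∫ t in b..y, m t) (m x) x :=
  integral_hasDerivAt_right
    ((hm.mono (Icc_subset_Ico_right hx.2)).intervalIntegrable_of_Icc hx.1.le)
    ((hm.mono Ioo_subset_Ico_self).stronglyMeasurableAtFilter isOpen_Ioo x hx)
    (hm.continuousAt (Ico_mem_nhds hx.1 hx.2))

theorem ContinuousOn.tendsto_integral_nhdsGT (hm : ContinuousOn m (Ico b a)) (hab : b < a) :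
    Tendsto (fun y => ∫ t in b..y, m t) (𝓝[>] b) (𝓝 0) := by
  obtain ⟨c, hbc, hca⟩ := exists_between hab
  have hint : MeasureTheory.IntegrableOn m (uIcc b c) := by
    rw [uIcc_of_le hbc.le]
    exact (hm.mono (Icc_subset_Ico_right hca)).integrableOn_Icc
  have hcont := continuousOn_primitive_interval hint b left_mem_uIcc
  rw [uIcc_of_le hbc.le] at hcont
  rw [← nhdsWithin_Ioo_eq_nhdsGT hbc]
  simpa using hcont.tendsto.mono_left (nhdsWithin_mono b Ioo_subset_Icc_self)

end Primitive

theorem tendsto_mul_rpow_neg_nhdsGT_zero {φ : ℝ → ℝ} {lam ε : ℝ} (hε : 0 < ε)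
    (hO : φ =O[𝓝[>] 0] fun r => r ^ (lam + ε)) :
    Tendsto (fun r => φ r * r ^ (-lam)) (𝓝[>] 0) (𝓝 0) := by
  have hO' : (fun r => φ r * r ^ (-lam)) =O[𝓝[>] 0] fun r => r ^ ε := by
    refine (hO.mul (Asymptotics.isBigO_refl (fun r : ℝ => r ^ (-lam)) _)).congr' .rfl ?_
    filter_upwards [self_mem_nhdsWithin] with r (hr : (0 : ℝ) < r)
    rw [← rpow_add hr, add_neg_cancel_comm]
  exact hO'.trans_tendsto <|
    ((continuous_rpow_const hε.le).tendsto' 0 0 (zero_rpow hε.ne')).mono_left nhdsWithin_le_nhds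

theorem scalar_fuchsian_ode_uniqueness_general {a lam ε : ℝ} (m : ℝ → ℝ)
    (hmcont : ContinuousOn m (Set.Ico 0 a))
    (φ : ℝ → ℝ)
    (hφ : ∀ r ∈ Set.Ioo 0 a, HasDerivAt φ (lam * r⁻¹ * φ r + m r * φ r) r)
    (hε : 0 < ε)
    (hO : φ =O[nhdsWithin 0 (Set.Ioi 0)] fun r => r ^ (lam + ε)) :
    ∀ r ∈ Set.Ioo 0 a, φ r = 0 := by
  intro r hr
  have ha : (0 : ℝ) < a := hr.1.trans hr.2
  set M : ℝ → ℝ := fun y => ∫ t in (0 : ℝ)..y, m t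
  set g : ℝ → ℝ := fun s => φ s * exp (-(lam * log s + M s))
  have hg_const : ∀ s ∈ Ioo 0 a, g s = g r := fun s hs =>
    isOpen_Ioo.mul_exp_neg_eq_of_hasDerivAt isPreconnected_Ioo (p := fun x => lam * x⁻¹ + m x)
      (fun x hx => by convert hφ x hx using 1; ring)
      (fun x hx => ((hasDerivAt_log hx.1.ne').const_mul lam).add
        (hmcont.hasDerivAt_integral_of_mem_Ioo hx)) hs hr
  have hg_eq : ∀ s > 0, g s = φ s * s ^ (-lam) * exp (-M s) := fun s hs => by
    simp only [g, rpow_def_of_pos hs, mul_assoc, ← exp_add]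
    ring_nf
  have hg_tendsto : Tendsto g (𝓝[>] 0) (𝓝 0) := by
    have h := (tendsto_mul_rpow_neg_nhdsGT_zero hε hO).mul
      (hmcont.tendsto_integral_nhdsGT ha).neg.rexp
    rw [zero_mul] at h
    refine h.congr' ?_
    filter_upwards [self_mem_nhdsWithin] with s hs using (hg_eq s hs).symm
  have hgr : g r = 0 := by
    refine tendsto_nhds_unique (tendsto_const_nhds.congr' ?_) hg_tendsto
    filter_upwards [Ioo_mem_nhdsGT ha] with s hs using (hg_const s hs).symm
  exact (mul_eq_zero.mp hgr).resolve_right (exp_ne_zero _)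

/-- scalar Fuchsian ODE lemma: a solution of
`φ' = λ r⁻¹ φ + m(r) φ` on `(0,a)` with `r·m(r) → 0` as `r → 0⁺` which is
`O(r^{λ+ε})` near `r = 0` for some `ε > 0` vanishes identically. -/
theorem scalar_fuchsian_ode_uniqueness {a lam ε : ℝ} (ha : 0 < a) (m : ℝ → ℝ)
    (hmcont : ContinuousOn m (Set.Ico 0 a))
    (hm0 : Filter.Tendsto (fun r => r * m r) (nhdsWithin 0 (Set.Ioi 0)) (nhds 0))
    (φ : ℝ → ℝ)
    (hφ : ∀ r ∈ Set.Ioo 0 a, HasDerivAt φ (lam * r⁻¹ * φ r + m r * φ r) r)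
    (hε : 0 < ε)
    (hO : φ =O[nhdsWithin 0 (Set.Ioi 0)] fun r => r ^ (lam + ε)) :
    ∀ r ∈ Set.Ioo 0 a, φ r = 0 :=
  scalar_fuchsian_ode_uniqueness_general m hmcont φ hφ hε hO
end

section
/- Let ω_{AB}(r) be a smooth family of symmetric trace-free 2-tensors on S² with ω_{AB} = O(r²) as r → 0, and let λ_{AB}(r) be the unique solution of (∂_r − r⁻¹)λ_{AB} = −2ω_{AB} satisfying λ_{AB} = O(r³). Let d^A be a conformal Killing field on the round S² and c : S² → ℝ a function. Then the following two conditions are equivalent: (i) 𝓛_d ω_{AB} − ½ r (𝒟_C d^C) ∂_r ω_{AB} + c r² ∂_r ω_{AB} + ½ c λ_{AB} = 0 for all r; (ii) 𝓛_d λ_{AB} − (½ r 𝒟_C d^C − c r²) ∂_r λ_{AB} + (½ 𝒟_C d^C − 2cr) λ_{AB} = 0 for all r. -/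
noncomputable section

/-- Points of the coordinate chart `ℝ^d`. -/
abbrev Pt (d : ℕ) := Fin d → ℝ

/-- Partial derivative `∂_i f` in the coordinate direction `i`. -/
def pd {d : ℕ} (i : Fin d) (f : Pt d → ℝ) (x : Pt d) : ℝ :=
  fderiv ℝ f x (Pi.single i 1)

/-- Christoffel symbols `Γ^σ_{μν}` of the metric `g` with (pointwise) inverse `ginv`. -/
def Chr {d : ℕ} (g ginv : Pt d → Matrix (Fin d) (Fin d) ℝ) (σ μ ν : Fin d) (x : Pt d) : ℝ :=
  (1 / 2) * ∑ κ, ginv x σ κ *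
    (pd μ (fun y => g y ν κ) x + pd ν (fun y => g y μ κ) x - pd κ (fun y => g y μ ν) x)

/-- Covariant derivative of a covector field: `(∇ω)_{μν} = ∇_μ ω_ν`. -/
def covD1 {d : ℕ} (g ginv : Pt d → Matrix (Fin d) (Fin d) ℝ) (ω : Pt d → Fin d → ℝ)
    (μ ν : Fin d) (x : Pt d) : ℝ :=
  pd μ (fun y => ω y ν) x - ∑ κ, Chr g ginv κ μ ν x * ω x κ

/-- Covariant derivative of a covariant 2-tensor field: `(∇T)_{σμν} = ∇_σ T_{μν}`. -/
def covD2 {d : ℕ} (g ginv : Pt d → Matrix (Fin d) (Fin d) ℝ)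
    (T : Pt d → Fin d → Fin d → ℝ) (σ μ ν : Fin d) (x : Pt d) : ℝ :=
  pd σ (fun y => T y μ ν) x - (∑ κ, Chr g ginv κ σ μ x * T x κ ν)
    - ∑ κ, Chr g ginv κ σ ν x * T x μ κ

/-- Covariant derivative of a vector field: `∇_μ X^κ`. -/
def covDvec {d : ℕ} (g ginv : Pt d → Matrix (Fin d) (Fin d) ℝ) (X : Pt d → Fin d → ℝ)
    (μ κ : Fin d) (x : Pt d) : ℝ :=
  pd μ (fun y => X y κ) x + ∑ α, Chr g ginv κ μ α x * X x α

/-- Lowering of the index of a vector field: `X_ν = g_{νκ} X^κ`. -/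
def lowerIdx {d : ℕ} (g : Pt d → Matrix (Fin d) (Fin d) ℝ) (X : Pt d → Fin d → ℝ) :
    Pt d → Fin d → ℝ :=
  fun x ν => ∑ κ, g x ν κ * X x κ

/-- Divergence `∇_κ X^κ` of a vector field. -/
def divg {d : ℕ} (g ginv : Pt d → Matrix (Fin d) (Fin d) ℝ) (X : Pt d → Fin d → ℝ)
    (x : Pt d) : ℝ :=
  ∑ κ, covDvec g ginv X κ κ x

/-- Riemann curvature tensor `R_{μνσ}{}^κ`. -/
def Riem {d : ℕ} (g ginv : Pt d → Matrix (Fin d) (Fin d) ℝ) (μ ν σ κ : Fin d)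
    (x : Pt d) : ℝ :=
  pd μ (fun y => Chr g ginv κ ν σ y) x - pd ν (fun y => Chr g ginv κ μ σ y) x
    + (∑ α, Chr g ginv α ν σ x * Chr g ginv κ μ α x)
    - ∑ α, Chr g ginv α μ σ x * Chr g ginv κ ν α x

/-- Ricci tensor `R_{μν} = R_{κμν}{}^κ`. -/
def RicciT {d : ℕ} (g ginv : Pt d → Matrix (Fin d) (Fin d) ℝ) (μ ν : Fin d) (x : Pt d) : ℝ :=
  ∑ κ, Riem g ginv κ μ ν κ x

/-- Scalar curvature `R = g^{μν} R_{μν}`. -/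
def scalR {d : ℕ} (g ginv : Pt d → Matrix (Fin d) (Fin d) ℝ) (x : Pt d) : ℝ :=
  ∑ μ, ∑ ν, ginv x μ ν * RicciT g ginv μ ν x

/-- Second covariant derivative of a covector: `∇_μ ∇_ν ω_σ`. -/
def secondCovD {d : ℕ} (g ginv : Pt d → Matrix (Fin d) (Fin d) ℝ) (ω : Pt d → Fin d → ℝ)
    (μ ν σ : Fin d) (x : Pt d) : ℝ :=
  covD2 g ginv (fun y a b => covD1 g ginv ω a b y) μ ν σ x

/-- Wave operator on a covector field: `□_g ω_μ = g^{σν} ∇_σ ∇_ν ω_μ`. -/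
def box1 {d : ℕ} (g ginv : Pt d → Matrix (Fin d) (Fin d) ℝ) (ω : Pt d → Fin d → ℝ)
    (μ : Fin d) (x : Pt d) : ℝ :=
  ∑ σ, ∑ ν, ginv x σ ν * secondCovD g ginv ω σ ν μ x

/-- Wave operator on a scalar: `□_g f = g^{μν} ∇_μ ∇_ν f`. -/
def box0 {d : ℕ} (g ginv : Pt d → Matrix (Fin d) (Fin d) ℝ) (f : Pt d → ℝ) (x : Pt d) : ℝ :=
  ∑ μ, ∑ ν, ginv x μ ν * covD1 g ginv (fun y k => pd k f y) μ ν x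

/-- Covariant Hessian of a scalar: `∇_μ ∇_ν f`. -/
def hessS {d : ℕ} (g ginv : Pt d → Matrix (Fin d) (Fin d) ℝ) (f : Pt d → ℝ)
    (μ ν : Fin d) (x : Pt d) : ℝ :=
  covD1 g ginv (fun y k => pd k f y) μ ν x

/-- `A_{μν} := ∇_μ X_ν + ∇_ν X_μ - 2 Y g_{μν}`. -/
def Atensor {d : ℕ} (g ginv : Pt d → Matrix (Fin d) (Fin d) ℝ) (X : Pt d → Fin d → ℝ)
    (Y : Pt d → ℝ) : Pt d → Fin d → Fin d → ℝ :=
  fun y a b => covD1 g ginv (lowerIdx g X) a b y + covD1 g ginv (lowerIdx g X) b a y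
    - 2 * Y y * g y a b

/-- Lie bracket of vector fields (coordinate formula). -/
def vbracket {d : ℕ} (V W : Pt d → Fin d → ℝ) (x : Pt d) (μ : Fin d) : ℝ :=
  (∑ κ, V x κ * pd κ (fun y => W y μ) x) - ∑ κ, W x κ * pd κ (fun y => V y μ) x

/-- Points of the spherical coordinate chart `(Θ, φ) = (x 0, x 1)`. -/
abbrev Pt2 := Pt 2

/-- The round metric `dΘ² + sin²Θ dφ²` on the unit 2-sphere, in spherical coordinates. -/
def sphMetric : Pt2 → Matrix (Fin 2) (Fin 2) ℝ := fun x => !![1, 0; 0, Real.sin (x 0) ^ 2]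

/-- The inverse round metric. -/
def sphInv : Pt2 → Matrix (Fin 2) (Fin 2) ℝ := fun x => !![1, 0; 0, (Real.sin (x 0) ^ 2)⁻¹]

/-- The coordinate domain `Θ ∈ (0, π)`. -/
def sphDom : Set Pt2 := {x | x 0 ∈ Set.Ioo 0 Real.pi}

/-- Lie derivative of a covariant 2-tensor `T` along the vector field `V`:
`(𝓛_V T)_{AB} = V^C ∂_C T_{AB} + T_{CB} ∂_A V^C + T_{AC} ∂_B V^C`. -/
def lie2 (V : Pt2 → Fin 2 → ℝ) (T : Pt2 → Fin 2 → Fin 2 → ℝ) (x : Pt2) (A B : Fin 2) : ℝ :=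
  (∑ C, V x C * pd C (fun y => T y A B) x)
    + (∑ C, T x C B * pd A (fun y => V y C) x)
    + ∑ C, T x A C * pd B (fun y => V y C) x

/-- Lie derivative of the round metric along `V`. -/
def lieMetric (V : Pt2 → Fin 2 → ℝ) (x : Pt2) (A B : Fin 2) : ℝ :=
  lie2 V (fun y a b => sphMetric y a b) x A B

/-- Gradient `𝒟^A c = s^{AB} ∂_B c` on the round sphere. -/
def sphGrad (c : Pt2 → ℝ) (x : Pt2) (A : Fin 2) : ℝ := ∑ B, sphInv x A B * pd B c x

/-- Laplace–Beltrami operator `Δ c = s^{AB} 𝒟_A 𝒟_B c` of the round metric. -/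
def sphLap (c : Pt2 → ℝ) (x : Pt2) : ℝ :=
  ∑ A, ∑ B, sphInv x A B * covD1 sphMetric sphInv (fun y k => pd k c y) A B x

/-- Covariant divergence `𝒟_A V^A` of a vector field on the round sphere. -/
def sphDiv (V : Pt2 → Fin 2 → ℝ) (x : Pt2) : ℝ := divg sphMetric sphInv V x

/-- The Killing field `K₁ = ∂_φ`. -/
def K1 : Pt2 → Fin 2 → ℝ := fun _ => ![0, 1]

/-- The Killing field `K₂ = sin φ ∂_Θ + cot Θ cos φ ∂_φ`. -/
def K2 : Pt2 → Fin 2 → ℝ := fun x =>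
  ![Real.sin (x 1), (Real.cos (x 0) / Real.sin (x 0)) * Real.cos (x 1)]

/-- The Killing field `K₃ = cos φ ∂_Θ - cot Θ sin φ ∂_φ`. -/
def K3 : Pt2 → Fin 2 → ℝ := fun x =>
  ![Real.cos (x 1), -((Real.cos (x 0) / Real.sin (x 0)) * Real.sin (x 1))]

/-- The conformal Killing field `C₁ = sin Θ ∂_Θ`. -/
def Cf1 : Pt2 → Fin 2 → ℝ := fun x => ![Real.sin (x 0), 0]

/-- The conformal Killing field `C₂ = cos Θ cos φ ∂_Θ - (sin Θ)⁻¹ sin φ ∂_φ`. -/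
def Cf2 : Pt2 → Fin 2 → ℝ := fun x =>
  ![Real.cos (x 0) * Real.cos (x 1), -((Real.sin (x 0))⁻¹ * Real.sin (x 1))]

/-- The conformal Killing field `C₃ = cos Θ sin φ ∂_Θ + (sin Θ)⁻¹ cos φ ∂_φ`. -/
def Cf3 : Pt2 → Fin 2 → ℝ := fun x =>
  ![Real.cos (x 0) * Real.sin (x 1), (Real.sin (x 0))⁻¹ * Real.cos (x 1)]

open Set Filter

namespace KIDaux

abbrev UU : Set (ℝ × Pt2) := Set.Ioi (0:ℝ) ×ˢ (Set.univ : Set Pt2)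

lemma isOpen_UU : IsOpen UU := isOpen_Ioi.prod isOpen_univ

lemma mem_UU {r : ℝ} (hr : 0 < r) (x : Pt2) : (r, x) ∈ UU := ⟨hr, trivial⟩

lemma isOpen_sphDom : IsOpen sphDom :=
  isOpen_Ioo.preimage (continuous_apply 0)

section Family
variable {F : ℝ × Pt2 → ℝ}

lemma fam_diffAt (hF : ContDiffOn ℝ (⊤ : ℕ∞) F UU) {r : ℝ} (hr : 0 < r) (x : Pt2) :
    DifferentiableAt ℝ F (r, x) :=
  (hF.contDiffAt (isOpen_UU.mem_nhds (mem_UU hr x))).differentiableAt (by simp)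

lemma hasFDerivAt_ins (r : ℝ) (x : Pt2) :
    HasFDerivAt (fun y : Pt2 => (r, y))
      ((0 : Pt2 →L[ℝ] ℝ).prod (ContinuousLinearMap.id ℝ Pt2)) x :=
  (hasFDerivAt_const r x).prodMk (hasFDerivAt_id x)

lemma fam_space_diffAt (hF : ContDiffOn ℝ (⊤ : ℕ∞) F UU) {r : ℝ} (hr : 0 < r) (x : Pt2) :
    DifferentiableAt ℝ (fun y => F (r, y)) x :=
  (fam_diffAt hF hr x).comp x (hasFDerivAt_ins r x).differentiableAt

lemma fam_pd_eq (hF : ContDiffOn ℝ (⊤ : ℕ∞) F UU) {r : ℝ} (hr : 0 < r) (x : Pt2) (C : Fin 2) :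
    pd C (fun y => F (r, y)) x = fderiv ℝ F (r, x) (0, Pi.single C 1) := by
  have h1 : HasFDerivAt (fun y => F (r, y))
      ((fderiv ℝ F (r, x)).comp ((0 : Pt2 →L[ℝ] ℝ).prod (ContinuousLinearMap.id ℝ Pt2))) x := by
    have := ((fam_diffAt hF hr x).hasFDerivAt).comp x (hasFDerivAt_ins r x)
    simpa [Function.comp_def] using this
  rw [pd, h1.fderiv]
  rfl

lemma fam_time_hasDerivAt (hF : ContDiffOn ℝ (⊤ : ℕ∞) F UU) {r : ℝ} (hr : 0 < r) (y : Pt2) :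
    HasDerivAt (fun t => F (t, y)) (fderiv ℝ F (r, y) ((1:ℝ), (0:Pt2))) r := by
  have h2 : HasDerivAt (fun t : ℝ => (t, y)) ((1:ℝ), (0:Pt2)) r :=
    (hasDerivAt_id r).prodMk (hasDerivAt_const r y)
  have := ((fam_diffAt hF hr y).hasFDerivAt).comp_hasDerivAt r h2
  simpa [Function.comp_def] using this

lemma fam_deriv_eq (hF : ContDiffOn ℝ (⊤ : ℕ∞) F UU) {r : ℝ} (hr : 0 < r) (y : Pt2) :
    deriv (fun t => F (t, y)) r = fderiv ℝ F (r, y) ((1:ℝ), (0:Pt2)) :=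
  (fam_time_hasDerivAt hF hr y).deriv

lemma fam_time_hasDerivAt' (hF : ContDiffOn ℝ (⊤ : ℕ∞) F UU) {r : ℝ} (hr : 0 < r) (y : Pt2) :
    HasDerivAt (fun t => F (t, y)) (deriv (fun t => F (t, y)) r) r := by
  rw [fam_deriv_eq hF hr y]; exact fam_time_hasDerivAt hF hr y

lemma fam_mixed (hF : ContDiffOn ℝ (⊤ : ℕ∞) F UU) {r : ℝ} (hr : 0 < r) (x : Pt2) (C : Fin 2) :
    HasDerivAt (fun t => pd C (fun y => F (t, y)) x)
      (pd C (fun y => deriv (fun t => F (t, y)) r) x) r := by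
  have hF1 : ContDiffOn ℝ (⊤ : ℕ∞) (fderiv ℝ F) UU := hF.fderiv_of_isOpen isOpen_UU (by simp)
  have hG : DifferentiableAt ℝ (fderiv ℝ F) (r, x) :=
    (hF1.contDiffAt (isOpen_UU.mem_nhds (mem_UU hr x))).differentiableAt (by simp)
  set G'' := fderiv ℝ (fderiv ℝ F) (r, x) with hG''def
  have h2 : HasDerivAt (fun t : ℝ => (t, x)) ((1:ℝ), (0:Pt2)) r :=
    (hasDerivAt_id r).prodMk (hasDerivAt_const r x)
  have h3 : HasDerivAt (fun t => fderiv ℝ F (t, x)) (G'' ((1:ℝ), (0:Pt2))) r := by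
    have := hG.hasFDerivAt.comp_hasDerivAt r h2
    simpa [Function.comp_def] using this
  have h4 : HasDerivAt (fun t => fderiv ℝ F (t, x) ((0:ℝ), Pi.single C 1))
      (G'' ((1:ℝ), (0:Pt2)) ((0:ℝ), Pi.single C 1)) r := by
    have := h3.clm_apply (hasDerivAt_const r ((0:ℝ), Pi.single C 1))
    simpa using this
  have hev : (fun t => pd C (fun y => F (t, y)) x)
      =ᶠ[nhds r] (fun t => fderiv ℝ F (t, x) ((0:ℝ), Pi.single C 1)) := by
    filter_upwards [Ioi_mem_nhds hr] with t ht
    exact fam_pd_eq hF ht x C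
  have hsymm : G'' ((1:ℝ), (0:Pt2)) ((0:ℝ), Pi.single C 1)
      = G'' ((0:ℝ), Pi.single C 1) ((1:ℝ), (0:Pt2)) := by
    apply second_derivative_symmetric_of_eventually (f := F) (f' := fderiv ℝ F) ?_ hG.hasFDerivAt
    filter_upwards [isOpen_UU.mem_nhds (mem_UU hr x)] with p hp
    exact (fam_diffAt hF hp.1 p.2).hasFDerivAt
  have hval : pd C (fun y => deriv (fun t => F (t, y)) r) x
      = G'' ((0:ℝ), Pi.single C 1) ((1:ℝ), (0:Pt2)) := by
    have hfun : (fun y => deriv (fun t => F (t, y)) r)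
        = (fun y => fderiv ℝ F (r, y) ((1:ℝ), (0:Pt2))) := by
      funext y; exact fam_deriv_eq hF hr y
    have hc : HasFDerivAt (fun y : Pt2 => fderiv ℝ F (r, y))
        (G''.comp ((0 : Pt2 →L[ℝ] ℝ).prod (ContinuousLinearMap.id ℝ Pt2))) x := by
      have := hG.hasFDerivAt.comp x (hasFDerivAt_ins r x)
      simpa [Function.comp_def] using this
    have h5 := hc.clm_apply (hasFDerivAt_const ((1:ℝ), (0:Pt2)) x)
    rw [pd, hfun, h5.fderiv]
    simp
  rw [hval, ← hsymm]
  exact HasDerivAt.congr_of_eventuallyEq h4 hev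

lemma fam_space_continuousAt (hF : ContDiffOn ℝ (⊤ : ℕ∞) F UU) {r : ℝ} (hr : 0 < r) (x : Pt2) :
    ContinuousAt (fun y => F (r, y)) x := (fam_space_diffAt hF hr x).continuousAt

lemma fam_pd_continuousAt (hF : ContDiffOn ℝ (⊤ : ℕ∞) F UU) {r : ℝ} (hr : 0 < r) (x : Pt2) (C : Fin 2) :
    ContinuousAt (fun y => pd C (fun z => F (r, z)) y) x := by
  have h1 : ContinuousAt (fun y : Pt2 => fderiv ℝ F (r, y)) x := by
    have h0 : ContinuousAt (fderiv ℝ F) (r, x) :=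
      ((hF.fderiv_of_isOpen (m := (⊤ : ℕ∞)) isOpen_UU (by simp)).continuousOn.continuousAt
        (isOpen_UU.mem_nhds (mem_UU hr x)))
    exact h0.comp ((continuous_const.prodMk continuous_id).continuousAt)
  have h2 : ContinuousAt (fun y => fderiv ℝ F (r, y) ((0:ℝ), Pi.single C 1)) x :=
    ((ContinuousLinearMap.apply ℝ ℝ ((0:ℝ), Pi.single C 1)).continuous.continuousAt).comp h1
  exact h2.congr (Filter.Eventually.of_forall fun y => (fam_pd_eq hF hr y C).symm)

end Family
end KIDaux
namespace KIDaux
open Set Filter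

section Main
variable (ω lam : ℝ → Pt2 → Fin 2 → Fin 2 → ℝ) (dA : Pt2 → Fin 2 → ℝ) (c : Pt2 → ℝ)

/-- The λ-form of the KID expression, with `∂_r λ` eliminated via the ODE. -/
def Ht (y : Pt2) (A B : Fin 2) (t : ℝ) : ℝ :=
  lie2 dA (lam t) y A B
    - (1 / 2 * t * sphDiv dA y - c y * t ^ 2) * (t⁻¹ * lam t y A B - 2 * ω t y A B)
    + (1 / 2 * sphDiv dA y - 2 * c y * t) * lam t y A B

/-- The part of `Ht` not involving spatial derivatives of `lam`. -/
def Rrem (A B : Fin 2) (r : ℝ) (y : Pt2) : ℝ :=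
  (∑ C, lam r y C B * pd A (fun z => dA z C) y)
  + (∑ C, lam r y A C * pd B (fun z => dA z C) y)
  - (1 / 2 * r * sphDiv dA y - c y * r ^ 2) * (r⁻¹ * lam r y A B - 2 * ω r y A B)
  + (1 / 2 * sphDiv dA y - 2 * c y * r) * lam r y A B

lemma Ht_split (y : Pt2) (A B : Fin 2) (r : ℝ) :
    Ht ω lam dA c y A B r
      = (∑ C, dA y C * pd C (fun z => lam r z A B) y) + Rrem ω lam dA c A B r y := by
  simp only [Ht, Rrem, lie2]; ring

lemma pd_lin {f g : Pt2 → ℝ} {y : Pt2} (a b : ℝ) (hf : DifferentiableAt ℝ f y)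
    (hg : DifferentiableAt ℝ g y) (C : Fin 2) :
    pd C (fun z => a * f z - b * g z) y = a * pd C f y - b * pd C g y := by
  have h1 : fderiv ℝ (fun z => a * f z - b * g z) y
      = a • fderiv ℝ f y - b • fderiv ℝ g y := by
    rw [fderiv_fun_sub (hf.const_mul a) (hg.const_mul b), fderiv_const_mul hf a,
      fderiv_const_mul hg b]
  simp [pd, h1]

variable (hls : ∀ A B, ContDiffOn ℝ (⊤ : ℕ∞) (fun p : ℝ × Pt2 => lam p.1 p.2 A B) UU)
  (hωs : ∀ A B, ContDiffOn ℝ (⊤ : ℕ∞) (fun p : ℝ × Pt2 => ω p.1 p.2 A B) UU)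
  (hODE : ∀ r > (0 : ℝ), ∀ x A B,
      deriv (fun t => lam t x A B) r - r⁻¹ * lam r x A B = -2 * ω r x A B)
include hls hωs hODE
set_option linter.unusedSectionVars false

lemma lam_hasDeriv {r : ℝ} (hr : 0 < r) (y : Pt2) (A B : Fin 2) :
    HasDerivAt (fun t => lam t y A B) (r⁻¹ * lam r y A B - 2 * ω r y A B) r := by
  have h := fam_time_hasDerivAt' (hls A B) hr y
  have he : deriv (fun t => lam t y A B) r = r⁻¹ * lam r y A B - 2 * ω r y A B := by
    have := hODE r hr y A B; linarith
  rw [← he]; exact h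

lemma pd_lam_hasDeriv {r : ℝ} (hr : 0 < r) (y : Pt2) (A B C : Fin 2) :
    HasDerivAt (fun t => pd C (fun z => lam t z A B) y)
      (r⁻¹ * pd C (fun z => lam r z A B) y - 2 * pd C (fun z => ω r z A B) y) r := by
  have h := fam_mixed (hls A B) hr y C
  have hfun : (fun z => deriv (fun t => lam t z A B) r)
      = (fun z => r⁻¹ * lam r z A B - 2 * ω r z A B) := by
    funext z; have := hODE r hr z A B; linarith
  have hval : pd C (fun z => deriv (fun t => lam t z A B) r) y
      = r⁻¹ * pd C (fun z => lam r z A B) y - 2 * pd C (fun z => ω r z A B) y := by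
    rw [hfun]
    exact pd_lin _ _ (fam_space_diffAt (hls A B) hr y) (fam_space_diffAt (hωs A B) hr y) C
  rw [← hval]; exact h

lemma lie2_hasDeriv {r : ℝ} (hr : 0 < r) (y : Pt2) (A B : Fin 2) :
    HasDerivAt (fun t => lie2 dA (lam t) y A B)
      (r⁻¹ * lie2 dA (lam r) y A B - 2 * lie2 dA (ω r) y A B) r := by
  have h0 := (pd_lam_hasDeriv (ω:=ω) (lam:=lam) (hls:=hls) (hωs:=hωs) (hODE:=hODE) hr y A B 0).const_mul (dA y 0)
  have h1 := (pd_lam_hasDeriv (ω:=ω) (lam:=lam) (hls:=hls) (hωs:=hωs) (hODE:=hODE) hr y A B 1).const_mul (dA y 1)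
  have l0B := (lam_hasDeriv (ω:=ω) (lam:=lam) (hls:=hls) (hωs:=hωs) (hODE:=hODE) hr y 0 B).mul_const (pd A (fun z => dA z 0) y)
  have l1B := (lam_hasDeriv (ω:=ω) (lam:=lam) (hls:=hls) (hωs:=hωs) (hODE:=hODE) hr y 1 B).mul_const (pd A (fun z => dA z 1) y)
  have lA0 := (lam_hasDeriv (ω:=ω) (lam:=lam) (hls:=hls) (hωs:=hωs) (hODE:=hODE) hr y A 0).mul_const (pd B (fun z => dA z 0) y)
  have lA1 := (lam_hasDeriv (ω:=ω) (lam:=lam) (hls:=hls) (hωs:=hωs) (hODE:=hODE) hr y A 1).mul_const (pd B (fun z => dA z 1) y)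
  have H := ((h0.add h1).add (l0B.add l1B)).add (lA0.add lA1)
  have heq : (fun t => lie2 dA (lam t) y A B)
      = (fun t => (dA y 0 * pd 0 (fun z => lam t z A B) y
            + dA y 1 * pd 1 (fun z => lam t z A B) y)
          + (lam t y 0 B * pd A (fun z => dA z 0) y + lam t y 1 B * pd A (fun z => dA z 1) y)
          + (lam t y A 0 * pd B (fun z => dA z 0) y + lam t y A 1 * pd B (fun z => dA z 1) y)) := by
    funext t; simp [lie2, Fin.sum_univ_two]
  rw [heq]
  refine H.congr_deriv ?_
  simp [lie2, Fin.sum_univ_two]; ring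

lemma Ht_hasDeriv {r : ℝ} (hr : 0 < r) (y : Pt2) (A B : Fin 2) :
    HasDerivAt (Ht ω lam dA c y A B)
      (r⁻¹ * Ht ω lam dA c y A B r
        - 2 * (lie2 dA (ω r) y A B
            - 1 / 2 * r * sphDiv dA y * deriv (fun t => ω t y A B) r
            + c y * r ^ 2 * deriv (fun t => ω t y A B) r
            + 1 / 2 * c y * lam r y A B)) r := by
  have hL := lie2_hasDeriv (ω:=ω) (lam:=lam) (dA:=dA) (hls:=hls) (hωs:=hωs) (hODE:=hODE) hr y A B
  have hF := lam_hasDeriv (ω:=ω) (lam:=lam) (hls:=hls) (hωs:=hωs) (hODE:=hODE) hr y A B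
  have hW : HasDerivAt (fun t => ω t y A B) (deriv (fun t => ω t y A B) r) r :=
    fam_time_hasDerivAt' (hωs A B) hr y
  have hInv : HasDerivAt (fun t : ℝ => t⁻¹) (-(r ^ 2)⁻¹) r := hasDerivAt_inv (ne_of_gt hr)
  have ha : HasDerivAt (fun t : ℝ => 1 / 2 * t * sphDiv dA y - c y * t ^ 2)
      (1 / 2 * 1 * sphDiv dA y - c y * (2 * r ^ 1)) r := by
    exact (((hasDerivAt_id r).const_mul (1/2 : ℝ)).mul_const (sphDiv dA y)).sub
      ((hasDerivAt_pow 2 r).const_mul (c y)) |>.congr_deriv (by norm_num)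
  have hb : HasDerivAt (fun t : ℝ => 1 / 2 * sphDiv dA y - 2 * c y * t)
      (-(2 * c y)) r := by
    exact ((hasDerivAt_const r (1 / 2 * sphDiv dA y)).sub
      (((hasDerivAt_id r).const_mul (2 * c y)))).congr_deriv (by ring)
  have hP := (hInv.mul hF).sub (hW.const_mul 2)
  have H := (hL.sub (ha.mul hP)).add (hb.mul hF)
  refine H.congr_deriv ?_
  show _ = _
  unfold Ht
  simp only [Pi.mul_apply, Pi.sub_apply]
  have hrne : r ≠ 0 := ne_of_gt hr
  field_simp
  ring

lemma Ht_eq {r : ℝ} (hr : 0 < r) (y : Pt2) (A B : Fin 2) :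
    Ht ω lam dA c y A B r
      = lie2 dA (lam r) y A B
        - (1 / 2 * r * sphDiv dA y - c y * r ^ 2) * deriv (fun t => lam t y A B) r
        + (1 / 2 * sphDiv dA y - 2 * c y * r) * lam r y A B := by
  have he : deriv (fun t => lam t y A B) r = r⁻¹ * lam r y A B - 2 * ω r y A B := by
    have := hODE r hr y A B; linarith
  rw [Ht, he]

end Main
end KIDaux
namespace KIDaux
open Set Filter

lemma contDiff_sphMetric_entry (a b : Fin 2) :
    ContDiff ℝ (⊤ : ℕ∞) (fun y : Pt2 => sphMetric y a b) := by
  have hsin : ContDiff ℝ (⊤ : ℕ∞) (fun y : Pt2 => Real.sin (y 0) ^ 2) :=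
    (Real.contDiff_sin.comp (contDiff_pi.mp contDiff_id 0)).pow 2
  fin_cases a <;> fin_cases b <;> simp [sphMetric] <;>
    first
      | exact contDiff_const
      | exact hsin

lemma pd_cont_of_contDiff {f : Pt2 → ℝ} (hf : ContDiff ℝ (⊤ : ℕ∞) f) (i : Fin 2) :
    Continuous fun y => pd i f y := by
  have h := (hf.fderiv_right (m := (⊤ : ℕ∞)) (by simp)).continuous
  exact (ContinuousLinearMap.apply ℝ ℝ (Pi.single i 1)).continuous.comp h

lemma sphDom_sin_ne {y : Pt2} (hy : y ∈ sphDom) : Real.sin (y 0) ≠ 0 :=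
  (Real.sin_pos_of_pos_of_lt_pi hy.1 hy.2).ne'

lemma contOn_sphInv_entry (a b : Fin 2) :
    ContinuousOn (fun y : Pt2 => sphInv y a b) sphDom := by
  have h1 : ContinuousOn (fun y : Pt2 => (Real.sin (y 0) ^ 2)⁻¹) sphDom := by
    apply ContinuousOn.inv₀
    · exact ((Real.continuous_sin.comp (continuous_apply 0)).pow 2).continuousOn
    · intro y hy; exact pow_ne_zero _ (sphDom_sin_ne hy)
  fin_cases a <;> fin_cases b <;> simp [sphInv] <;>
    first
      | exact continuousOn_const
      | exact h1

lemma contOn_Chr (σ μ ν : Fin 2) :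
    ContinuousOn (fun y => Chr sphMetric sphInv σ μ ν y) sphDom := by
  have hterm : ∀ κ : Fin 2, ContinuousOn (fun y =>
      sphInv y σ κ * (pd μ (fun z => sphMetric z ν κ) y + pd ν (fun z => sphMetric z μ κ) y
        - pd κ (fun z => sphMetric z μ ν) y)) sphDom := fun κ =>
    (contOn_sphInv_entry σ κ).mul
      ((((pd_cont_of_contDiff (contDiff_sphMetric_entry ν κ) μ).continuousOn.add
        (pd_cont_of_contDiff (contDiff_sphMetric_entry μ κ) ν).continuousOn)).sub
        (pd_cont_of_contDiff (contDiff_sphMetric_entry μ ν) κ).continuousOn)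
  simp only [Chr, Fin.sum_univ_two]
  exact continuousOn_const.mul ((hterm 0).add (hterm 1))

section ContMain
variable {ω lam : ℝ → Pt2 → Fin 2 → Fin 2 → ℝ} {dA : Pt2 → Fin 2 → ℝ} {c : Pt2 → ℝ}
variable (hls : ∀ A B, ContDiffOn ℝ (⊤ : ℕ∞) (fun p : ℝ × Pt2 => lam p.1 p.2 A B) UU)
  (hωs : ∀ A B, ContDiffOn ℝ (⊤ : ℕ∞) (fun p : ℝ × Pt2 => ω p.1 p.2 A B) UU)
  (hd : ∀ A, ContDiffOn ℝ (⊤ : ℕ∞) (fun x => dA x A) sphDom)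
  (hc : ContDiffOn ℝ (⊤ : ℕ∞) c sphDom)
include hls hωs hd hc
set_option linter.unusedSectionVars false

lemma contOn_pd_dA (i C : Fin 2) :
    ContinuousOn (fun y => pd i (fun z => dA z C) y) sphDom := by
  have h := ((hd C).continuousOn_fderiv_of_isOpen isOpen_sphDom (by simp))
  exact ((ContinuousLinearMap.apply ℝ ℝ (Pi.single i 1)).continuous.comp_continuousOn h)

lemma contOn_sphDiv : ContinuousOn (fun y => sphDiv dA y) sphDom := by
  have hdc : ∀ κ, ContinuousOn (fun y => dA y κ) sphDom := fun κ => (hd κ).continuousOn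
  have hterm : ∀ κ : Fin 2, ContinuousOn (fun y => covDvec sphMetric sphInv dA κ κ y)
      sphDom := by
    intro κ
    simp only [covDvec, Fin.sum_univ_two]
    exact (contOn_pd_dA hls hωs hd hc κ κ).add
      (((contOn_Chr κ κ 0).mul (hdc 0)).add ((contOn_Chr κ κ 1).mul (hdc 1)))
  simp only [sphDiv, divg, Fin.sum_univ_two]
  exact (hterm 0).add (hterm 1)

lemma contOn_lam_fixed {r : ℝ} (hr : 0 < r) (A B : Fin 2) :
    ContinuousOn (fun y => lam r y A B) sphDom :=
  fun y _ => (fam_space_continuousAt (hls A B) hr y).continuousWithinAt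

lemma contOn_omega_fixed {r : ℝ} (hr : 0 < r) (A B : Fin 2) :
    ContinuousOn (fun y => ω r y A B) sphDom :=
  fun y _ => (fam_space_continuousAt (hωs A B) hr y).continuousWithinAt

lemma contOn_lie2_lam {r : ℝ} (hr : 0 < r) (A B : Fin 2) :
    ContinuousOn (fun y => lie2 dA (lam r) y A B) sphDom := by
  have hpdlam : ∀ C : Fin 2, ContinuousOn (fun y => pd C (fun z => lam r z A B) y) sphDom :=
    fun C y _ => (fam_pd_continuousAt (hls A B) hr y C).continuousWithinAt
  have hdc : ∀ C, ContinuousOn (fun y => dA y C) sphDom := fun C => (hd C).continuousOn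
  simp only [lie2, Fin.sum_univ_two]
  exact ((((hdc 0).mul (hpdlam 0)).add ((hdc 1).mul (hpdlam 1))).add
    (((contOn_lam_fixed hls hωs hd hc hr 0 B).mul (contOn_pd_dA hls hωs hd hc A 0)).add
      ((contOn_lam_fixed hls hωs hd hc hr 1 B).mul (contOn_pd_dA hls hωs hd hc A 1)))).add
    (((contOn_lam_fixed hls hωs hd hc hr A 0).mul (contOn_pd_dA hls hωs hd hc B 0)).add
      ((contOn_lam_fixed hls hωs hd hc hr A 1).mul (contOn_pd_dA hls hωs hd hc B 1)))

lemma contOn_lie2_omega {r : ℝ} (hr : 0 < r) (A B : Fin 2) :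
    ContinuousOn (fun y => lie2 dA (ω r) y A B) sphDom := by
  have hpdω : ∀ C : Fin 2, ContinuousOn (fun y => pd C (fun z => ω r z A B) y) sphDom :=
    fun C y _ => (fam_pd_continuousAt (hωs A B) hr y C).continuousWithinAt
  have hdc : ∀ C, ContinuousOn (fun y => dA y C) sphDom := fun C => (hd C).continuousOn
  simp only [lie2, Fin.sum_univ_two]
  exact ((((hdc 0).mul (hpdω 0)).add ((hdc 1).mul (hpdω 1))).add
    (((contOn_omega_fixed hls hωs hd hc hr 0 B).mul (contOn_pd_dA hls hωs hd hc A 0)).add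
      ((contOn_omega_fixed hls hωs hd hc hr 1 B).mul (contOn_pd_dA hls hωs hd hc A 1)))).add
    (((contOn_omega_fixed hls hωs hd hc hr A 0).mul (contOn_pd_dA hls hωs hd hc B 0)).add
      ((contOn_omega_fixed hls hωs hd hc hr A 1).mul (contOn_pd_dA hls hωs hd hc B 1)))

lemma contOn_Rrem {r : ℝ} (hr : 0 < r) (A B : Fin 2) :
    ContinuousOn (fun y => Rrem ω lam dA c A B r y) sphDom := by
  have hcc : ContinuousOn c sphDom := hc.continuousOn
  simp only [Rrem, Fin.sum_univ_two]
  exact (((((contOn_lam_fixed hls hωs hd hc hr 0 B).mul (contOn_pd_dA hls hωs hd hc A 0)).add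
      ((contOn_lam_fixed hls hωs hd hc hr 1 B).mul (contOn_pd_dA hls hωs hd hc A 1))).add
    (((contOn_lam_fixed hls hωs hd hc hr A 0).mul (contOn_pd_dA hls hωs hd hc B 0)).add
      ((contOn_lam_fixed hls hωs hd hc hr A 1).mul (contOn_pd_dA hls hωs hd hc B 1)))).sub
    (((continuousOn_const.mul (contOn_sphDiv hls hωs hd hc)).sub (hcc.mul continuousOn_const)).mul
      ((continuousOn_const.mul (contOn_lam_fixed hls hωs hd hc hr A B)).sub
        (continuousOn_const.mul (contOn_omega_fixed hls hωs hd hc hr A B))))).add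
    (((continuousOn_const.mul (contOn_sphDiv hls hωs hd hc)).sub
      ((continuousOn_const.mul hcc).mul continuousOn_const)).mul
      (contOn_lam_fixed hls hωs hd hc hr A B))

lemma contOn_Ht_fixed {r : ℝ} (hr : 0 < r) (A B : Fin 2) :
    ContinuousOn (fun y => Ht ω lam dA c y A B r) sphDom := by
  have hcc : ContinuousOn c sphDom := hc.continuousOn
  simp only [Ht]
  exact ((contOn_lie2_lam hls hωs hd hc hr A B).sub
    ((((continuousOn_const.mul (contOn_sphDiv hls hωs hd hc)).sub (hcc.mul continuousOn_const)).mul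
      ((continuousOn_const.mul (contOn_lam_fixed hls hωs hd hc hr A B)).sub
        (continuousOn_const.mul (contOn_omega_fixed hls hωs hd hc hr A B)))))).add
    (((continuousOn_const.mul (contOn_sphDiv hls hωs hd hc)).sub
      ((continuousOn_const.mul hcc).mul continuousOn_const)).mul
      (contOn_lam_fixed hls hωs hd hc hr A B))

end ContMain
end KIDaux
namespace KIDaux
open Set Filter

lemma const_zero_of_bound {K M : ℝ}
    (h : ∀ᶠ r in nhdsWithin (0:ℝ) (Set.Ioi 0), |K * r| ≤ M * r ^ 3) : K = 0 := by
  by_contra hK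
  have h1 : Tendsto (fun r : ℝ => M * r ^ 2) (nhdsWithin 0 (Set.Ioi 0)) (nhds 0) := by
    have hcont : Tendsto (fun r : ℝ => M * r ^ 2) (nhds 0) (nhds (M * 0 ^ 2)) :=
      (continuous_const.mul (continuous_pow 2)).tendsto 0
    simpa using hcont.mono_left nhdsWithin_le_nhds
  have h2 : ∀ᶠ r in nhdsWithin (0:ℝ) (Set.Ioi 0), M * r ^ 2 < |K| := by
    apply h1.eventually_lt_const (abs_pos.mpr hK)
  have h3 : ∀ᶠ r in nhdsWithin (0:ℝ) (Set.Ioi 0), r ∈ Set.Ioi (0:ℝ) := self_mem_nhdsWithin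
  obtain ⟨r, hb, hlt, hrpos⟩ := (h.and (h2.and h3)).exists
  rw [Set.mem_Ioi] at hrpos
  rw [abs_mul, abs_of_pos hrpos] at hb
  nlinarith [abs_nonneg K]

lemma incr_lower {s₀ s₁ : ℝ} (hs : s₀ ≤ s₁) {g g' : ℝ → ℝ} {κ : ℝ}
    (hder : ∀ s ∈ Set.Icc s₀ s₁, HasDerivAt g (g' s) s)
    (hge : ∀ s ∈ Set.Icc s₀ s₁, κ ≤ g' s) :
    κ * (s₁ - s₀) ≤ g s₁ - g s₀ := by
  have hf : ∀ s ∈ Set.Icc s₀ s₁, HasDerivAt (fun u => g u - κ * u) (g' s - κ * 1) s :=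
    fun s hsm => (hder s hsm).sub ((hasDerivAt_id s).const_mul κ)
  have hmono : MonotoneOn (fun u => g u - κ * u) (Set.Icc s₀ s₁) := by
    apply monotoneOn_of_deriv_nonneg (convex_Icc _ _)
    · exact fun s hsm => (hf s hsm).continuousAt.continuousWithinAt
    · exact fun s hsm =>
        (hf s (interior_subset hsm)).differentiableAt.differentiableWithinAt
    · intro s hsm
      rw [(hf s (interior_subset hsm)).deriv]
      have := hge s (interior_subset hsm); linarith
  have := hmono (left_mem_Icc.mpr hs) (right_mem_Icc.mpr hs) hs
  simp only at this
  linarith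

lemma no_lin_growth {s₀ s₁ m C r₀ : ℝ} (hs : s₀ < s₁) (hm : 0 < m) (hC : 0 ≤ C)
    (hr₀ : 0 < r₀) (φ ψ : ℝ → ℝ → ℝ)
    (hder : ∀ r ∈ Set.Ioc (0:ℝ) r₀, ∀ s ∈ Set.Icc s₀ s₁, HasDerivAt (φ r) (ψ r s) s)
    (hlb : ∀ r ∈ Set.Ioc (0:ℝ) r₀, ∀ s ∈ Set.Icc s₀ s₁, m * r - C * r ^ 3 ≤ ψ r s)
    (hb : ∀ r ∈ Set.Ioc (0:ℝ) r₀, ∀ s ∈ Set.Icc s₀ s₁, |φ r s| ≤ C * r ^ 3) : False := by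
  have key : ∀ r ∈ Set.Ioc (0:ℝ) r₀, m * (s₁ - s₀) ≤ C * (2 + (s₁ - s₀)) * r ^ 2 := by
    intro r hr
    have h1 : (m * r - C * r ^ 3) * (s₁ - s₀) ≤ φ r s₁ - φ r s₀ :=
      incr_lower hs.le (hder r hr) (hlb r hr)
    have ha := abs_le.mp (hb r hr s₁ (right_mem_Icc.mpr hs.le))
    have hb' := abs_le.mp (hb r hr s₀ (left_mem_Icc.mpr hs.le))
    have hrpos := hr.1
    have hmain : (m * (s₁ - s₀)) * r ≤ (C * (2 + (s₁ - s₀)) * r ^ 2) * r := by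
      nlinarith [ha.1, ha.2, hb'.1, hb'.2]
    exact le_of_mul_le_mul_right hmain hrpos
  have h1 : Tendsto (fun r : ℝ => C * (2 + (s₁ - s₀)) * r ^ 2)
      (nhdsWithin 0 (Set.Ioi 0)) (nhds 0) := by
    have hcont : Tendsto (fun r : ℝ => C * (2 + (s₁ - s₀)) * r ^ 2) (nhds 0)
        (nhds (C * (2 + (s₁ - s₀)) * 0 ^ 2)) :=
      (continuous_const.mul (continuous_pow 2)).tendsto 0
    simpa using hcont.mono_left nhdsWithin_le_nhds
  have h2 : ∀ᶠ r in nhdsWithin (0:ℝ) (Set.Ioi 0),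
      C * (2 + (s₁ - s₀)) * r ^ 2 < m * (s₁ - s₀) :=
    h1.eventually_lt_const (by nlinarith)
  have h3 : Set.Ioc (0:ℝ) r₀ ∈ nhdsWithin (0:ℝ) (Set.Ioi 0) :=
    Ioc_mem_nhdsGT_of_mem ⟨le_refl 0, hr₀⟩
  obtain ⟨r, hlt, hmem⟩ := (h2.and h3).exists
  exact absurd (key r hmem) (not_le.mpr hlt)

lemma pd_eventually_zero {f : Pt2 → ℝ} {x : Pt2} (h : ∀ᶠ y in nhds x, f y = 0) (i : Fin 2) :
    pd i f x = 0 := by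
  have he : f =ᶠ[nhds x] (fun _ => (0:ℝ)) := by filter_upwards [h] with y hy; simpa using hy
  rw [pd, he.fderiv_eq]
  simp

lemma fderiv_apply_vec {f : Pt2 → ℝ} {z : Pt2} (hf : DifferentiableAt ℝ f z) (v : Pt2) :
    fderiv ℝ f z v = v 0 * pd 0 f z + v 1 * pd 1 f z := by
  have hv : v = v 0 • (Pi.single 0 (1:ℝ) : Pt2) + v 1 • (Pi.single 1 (1:ℝ) : Pt2) := by
    funext i; fin_cases i <;> simp [Pi.single_apply]
  conv_lhs => rw [hv]
  rw [map_add, map_smul, map_smul]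
  simp [pd, smul_eq_mul]

lemma const_of_deriv_zero {q : ℝ → ℝ} (hq : ∀ u ∈ Set.Ioi (0:ℝ), HasDerivAt q 0 u)
    {s t : ℝ} (hs : 0 < s) (ht : 0 < t) : q s = q t := by
  have hmin : 0 < min s t := lt_min hs ht
  have h1 : ∀ x ∈ Set.Icc (min s t) (max s t), q x = q (min s t) := by
    apply constant_of_has_deriv_right_zero
    · exact fun x hx =>
        (hq x (lt_of_lt_of_le hmin hx.1)).continuousAt.continuousWithinAt
    · exact fun x hx => (hq x (lt_of_lt_of_le hmin hx.1)).hasDerivWithinAt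
  have hsm : s ∈ Set.Icc (min s t) (max s t) := ⟨min_le_left s t, le_max_left s t⟩
  have htm : t ∈ Set.Icc (min s t) (max s t) := ⟨min_le_right s t, le_max_right s t⟩
  rw [h1 s hsm, h1 t htm]

end KIDaux
namespace KIDaux
open Set Filter Asymptotics

section Lin
variable {ω lam : ℝ → Pt2 → Fin 2 → Fin 2 → ℝ} {dA : Pt2 → Fin 2 → ℝ} {c : Pt2 → ℝ}
variable (hls : ∀ A B, ContDiffOn ℝ (⊤ : ℕ∞) (fun p : ℝ × Pt2 => lam p.1 p.2 A B) UU)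
  (hωs : ∀ A B, ContDiffOn ℝ (⊤ : ℕ∞) (fun p : ℝ × Pt2 => ω p.1 p.2 A B) UU)
  (hODE : ∀ r > (0 : ℝ), ∀ x A B,
      deriv (fun t => lam t x A B) r - r⁻¹ * lam r x A B = -2 * ω r x A B)
  (hi : ∀ r > (0:ℝ), ∀ x ∈ sphDom, ∀ A B,
      lie2 dA (ω r) x A B - 1 / 2 * r * sphDiv dA x * deriv (fun t => ω t x A B) r
        + c x * r ^ 2 * deriv (fun t => ω t x A B) r + 1 / 2 * c x * lam r x A B = 0)
include hls hωs hODE hi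
set_option linter.unusedSectionVars false

lemma Ht_linear {y : Pt2} (hy : y ∈ sphDom) (A B : Fin 2) {t : ℝ} (ht : 0 < t) :
    Ht ω lam dA c y A B t = Ht ω lam dA c y A B 1 * t := by
  set H := Ht ω lam dA c y A B with hH
  have hq : ∀ u ∈ Set.Ioi (0:ℝ), HasDerivAt (fun v => v⁻¹ * H v) 0 u := by
    intro u hu
    rw [Set.mem_Ioi] at hu
    have hH' := Ht_hasDeriv (ω:=ω) (lam:=lam) (dA:=dA) (c:=c) (hls:=hls) (hωs:=hωs)
      (hODE:=hODE) hu y A B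
    have h0 := (hasDerivAt_inv (ne_of_gt hu)).mul hH'
    refine h0.congr_deriv ?_
    rw [hi u hu y hy A B]
    have hune : u ≠ 0 := ne_of_gt hu
    field_simp
    ring
  have hqst := const_of_deriv_zero hq ht one_pos
  have htne : t ≠ 0 := ne_of_gt ht
  have h2 : H t = t * (t⁻¹ * H t) := by field_simp
  rw [h2, hqst]
  field_simp
end Lin

section BigO
variable {ω lam : ℝ → Pt2 → Fin 2 → Fin 2 → ℝ} {dA : Pt2 → Fin 2 → ℝ} {c : Pt2 → ℝ}
variable (hlamO : ∀ (x : Pt2) (A B : Fin 2),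
    (fun r => lam r x A B) =O[nhdsWithin 0 (Set.Ioi 0)] fun r => r ^ 3)
  (hωO : ∀ (x : Pt2) (A B : Fin 2),
    (fun r => ω r x A B) =O[nhdsWithin 0 (Set.Ioi 0)] fun r => r ^ 2)
include hlamO hωO
set_option linter.unusedSectionVars false

lemma Rrem_isBigO (y : Pt2) (A B : Fin 2) :
    (fun r => Rrem ω lam dA c A B r y) =O[nhdsWithin 0 (Set.Ioi 0)] fun r => r ^ 3 := by
  set l := nhdsWithin (0:ℝ) (Set.Ioi 0) with hl
  have hIoo : Set.Ioo (0:ℝ) 1 ∈ l := Ioo_mem_nhdsGT_of_mem ⟨le_refl 0, one_pos⟩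
  -- bounded coefficients are =O[l] of constant one
  have hbd : ∀ k : ℝ, (fun _ : ℝ => k) =O[l] (fun _ : ℝ => (1:ℝ)) := fun k =>
    isBigO_const_const k one_ne_zero l
  -- lam components times constants
  have hT : ∀ (a b : Fin 2) (k : ℝ),
      (fun r => lam r y a b * k) =O[l] fun r => r ^ 3 := by
    intro a b k
    have := (hlamO y a b).mul (hbd k)
    exact this.congr (fun x => rfl) (fun x => mul_one _)
  -- the coefficient (1/2 r D - c r^2) is O(r)
  have hA : (fun r : ℝ => 1 / 2 * r * sphDiv dA y - c y * r ^ 2) =O[l] fun r => r := by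
    rw [isBigO_iff]
    refine ⟨|sphDiv dA y| / 2 + |c y|, ?_⟩
    filter_upwards [hIoo] with r hr
    have h0 := hr.1; have h1 := hr.2
    rw [Real.norm_eq_abs, Real.norm_eq_abs, abs_of_pos h0]
    have hr2 : r ^ 2 ≤ r := by nlinarith
    have htri := abs_add_le (1 / 2 * r * sphDiv dA y) (-(c y * r ^ 2))
    rw [abs_neg, ← sub_eq_add_neg] at htri
    refine htri.trans ?_
    have e1 : |1 / 2 * r * sphDiv dA y| = |sphDiv dA y| / 2 * r := by
      rw [abs_mul, abs_mul, abs_of_pos h0]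
      rw [abs_of_pos (by norm_num : (0:ℝ) < 1/2)]
      ring
    have e2 : |c y * r ^ 2| ≤ |c y| * r := by
      rw [abs_mul, abs_of_pos (by positivity : (0:ℝ) < r ^ 2)]
      exact mul_le_mul_of_nonneg_left hr2 (abs_nonneg _)
    rw [e1]
    nlinarith [abs_nonneg (c y)]
  -- r⁻¹ * lam is O(r^2)
  have hinvlam : (fun r : ℝ => r⁻¹ * lam r y A B) =O[l] fun r => r ^ 2 := by
    obtain ⟨c5, hc5⟩ := (hlamO y A B).bound
    rw [isBigO_iff]
    refine ⟨c5, ?_⟩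
    filter_upwards [hc5, self_mem_nhdsWithin] with r hb hmem
    rw [Set.mem_Ioi] at hmem
    rw [Real.norm_eq_abs, Real.norm_eq_abs] at hb ⊢
    rw [abs_mul, abs_inv, abs_of_pos hmem]
    rw [abs_of_pos (by positivity : (0:ℝ) < r ^ 3)] at hb
    rw [abs_of_pos (by positivity : (0:ℝ) < r ^ 2)]
    calc r⁻¹ * |lam r y A B| ≤ r⁻¹ * (c5 * r ^ 3) :=
          mul_le_mul_of_nonneg_left hb (by positivity)
      _ = c5 * r ^ 2 := by field_simp
  have hBB : (fun r : ℝ => r⁻¹ * lam r y A B - 2 * ω r y A B) =O[l] fun r => r ^ 2 := by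
    have h2 := ((hωO y A B).const_mul_left 2)
    exact hinvlam.sub h2
  have hAB : (fun r : ℝ => (1 / 2 * r * sphDiv dA y - c y * r ^ 2)
      * (r⁻¹ * lam r y A B - 2 * ω r y A B)) =O[l] fun r => r ^ 3 := by
    have := hA.mul hBB
    exact this.congr (fun x => rfl) (fun x => by ring)
  -- (1/2 D - 2 c r) * lam is O(r^3)
  have hcoef2 : (fun r : ℝ => 1 / 2 * sphDiv dA y - 2 * c y * r) =O[l] fun _ => (1:ℝ) := by
    rw [isBigO_iff]
    refine ⟨|sphDiv dA y| / 2 + 2 * |c y|, ?_⟩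
    filter_upwards [hIoo] with r hr
    have h0 := hr.1; have h1 := hr.2
    rw [Real.norm_eq_abs, norm_one, mul_one]
    have htri := abs_add_le (1 / 2 * sphDiv dA y) (-(2 * c y * r))
    rw [abs_neg, ← sub_eq_add_neg] at htri
    refine htri.trans ?_
    have e1 : |1 / 2 * sphDiv dA y| = |sphDiv dA y| / 2 := by
      rw [abs_mul, abs_of_pos (by norm_num : (0:ℝ) < 1/2)]; ring
    have e2 : |2 * c y * r| ≤ 2 * |c y| := by
      rw [abs_mul, abs_mul, abs_of_pos (by norm_num : (0:ℝ) < 2),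
        abs_of_pos h0]
      nlinarith [abs_nonneg (c y)]
    rw [e1]
    linarith
  have hT3 : (fun r : ℝ => (1 / 2 * sphDiv dA y - 2 * c y * r) * lam r y A B)
      =O[l] fun r => r ^ 3 := by
    have := hcoef2.mul (hlamO y A B)
    exact this.congr (fun x => rfl) (fun x => one_mul _)
  have hsum := ((((hT 0 B (pd A (fun z => dA z 0) y)).add
      (hT 1 B (pd A (fun z => dA z 1) y))).add
    ((hT A 0 (pd B (fun z => dA z 0) y)).add
      (hT A 1 (pd B (fun z => dA z 1) y)))).sub hAB).add hT3
  have heq : (fun r => Rrem ω lam dA c A B r y)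
      = (fun r => (((lam r y 0 B * pd A (fun z => dA z 0) y
          + lam r y 1 B * pd A (fun z => dA z 1) y)
          + (lam r y A 0 * pd B (fun z => dA z 0) y
            + lam r y A 1 * pd B (fun z => dA z 1) y))
          - (1 / 2 * r * sphDiv dA y - c y * r ^ 2)
            * (r⁻¹ * lam r y A B - 2 * ω r y A B))
          + (1 / 2 * sphDiv dA y - 2 * c y * r) * lam r y A B) := by
    funext r; simp [Rrem, Fin.sum_univ_two]
  rw [heq]
  exact hsum

lemma lam_Rrem_eventually_bound (y : Pt2) (A B : Fin 2) :
    ∃ M ≥ (0:ℝ), ∀ᶠ r in nhdsWithin (0:ℝ) (Set.Ioi 0),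
      |lam r y A B| ≤ M * r ^ 3 ∧ |Rrem ω lam dA c A B r y| ≤ M * r ^ 3 := by
  obtain ⟨M1, hM1⟩ := (hlamO y A B).bound
  obtain ⟨M2, hM2⟩ := (Rrem_isBigO (ω:=ω) (lam:=lam) (dA:=dA) (c:=c) hlamO hωO y A B).bound
  refine ⟨|M1| + |M2|, by positivity, ?_⟩
  filter_upwards [hM1, hM2, self_mem_nhdsWithin] with r h1 h2 hmem
  rw [Set.mem_Ioi] at hmem
  have h3 : ‖r ^ 3‖ = r ^ 3 := by rw [Real.norm_eq_abs]; exact abs_of_pos (by positivity)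
  rw [Real.norm_eq_abs, h3] at h1 h2
  have hr3 : (0:ℝ) ≤ r ^ 3 := by positivity
  constructor
  · exact h1.trans (mul_le_mul_of_nonneg_right
      (by nlinarith [le_abs_self M1, abs_nonneg M2]) hr3)
  · exact h2.trans (mul_le_mul_of_nonneg_right
      (by nlinarith [le_abs_self M2, abs_nonneg M1]) hr3)

end BigO
end KIDaux
namespace KIDaux
open Set Filter Asymptotics

section KZero
variable {ω lam : ℝ → Pt2 → Fin 2 → Fin 2 → ℝ} {dA : Pt2 → Fin 2 → ℝ} {c : Pt2 → ℝ}
variable (hls : ∀ A B, ContDiffOn ℝ (⊤ : ℕ∞) (fun p : ℝ × Pt2 => lam p.1 p.2 A B) UU)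
  (hωs : ∀ A B, ContDiffOn ℝ (⊤ : ℕ∞) (fun p : ℝ × Pt2 => ω p.1 p.2 A B) UU)
  (hODE : ∀ r > (0 : ℝ), ∀ x A B,
      deriv (fun t => lam t x A B) r - r⁻¹ * lam r x A B = -2 * ω r x A B)
  (hd : ∀ A, ContDiffOn ℝ (⊤ : ℕ∞) (fun x => dA x A) sphDom)
  (hc : ContDiffOn ℝ (⊤ : ℕ∞) c sphDom)
  (hlamO : ∀ (x : Pt2) (A B : Fin 2),
    (fun r => lam r x A B) =O[nhdsWithin 0 (Set.Ioi 0)] fun r => r ^ 3)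
  (hωO : ∀ (x : Pt2) (A B : Fin 2),
    (fun r => ω r x A B) =O[nhdsWithin 0 (Set.Ioi 0)] fun r => r ^ 2)
  (hi : ∀ r > (0:ℝ), ∀ x ∈ sphDom, ∀ A B,
      lie2 dA (ω r) x A B - 1 / 2 * r * sphDiv dA x * deriv (fun t => ω t x A B) r
        + c x * r ^ 2 * deriv (fun t => ω t x A B) r + 1 / 2 * c x * lam r x A B = 0)
include hls hωs hODE hd hc hlamO hωO hi
set_option linter.unusedSectionVars false
set_option maxHeartbeats 1000000

lemma K_zero {x : Pt2} (hx : x ∈ sphDom) (A B : Fin 2) :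
    Ht ω lam dA c x A B 1 = 0 := by
  have hKcont : ContinuousOn (fun y => Ht ω lam dA c y A B 1) sphDom :=
    contOn_Ht_fixed hls hωs hd hc one_pos A B
  -- density of zeros of K
  have hdense : ∀ δ > (0:ℝ), Metric.ball x δ ⊆ sphDom →
      ∃ z ∈ Metric.ball x δ, Ht ω lam dA c z A B 1 = 0 := by
    intro δ hδ hball
    by_cases hd0 : ∀ y ∈ Metric.ball x δ, ∀ C, dA y C = 0
    -- Case 1: the vector field vanishes on the ball
    · refine ⟨x, Metric.mem_ball_self hδ, ?_⟩
      have hzd : ∀ C : Fin 2, dA x C = 0 := hd0 x (Metric.mem_ball_self hδ)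
      have hev : ∀ r : ℝ, Ht ω lam dA c x A B r = Rrem ω lam dA c A B r x := by
        intro r
        rw [Ht_split]
        simp [Fin.sum_univ_two, hzd]
      obtain ⟨M, _, hMev⟩ := lam_Rrem_eventually_bound (ω:=ω) (lam:=lam) (dA:=dA) (c:=c)
        hlamO hωO x A B
      apply const_zero_of_bound (M := M)
      filter_upwards [hMev, self_mem_nhdsWithin] with r hb hmem
      rw [Set.mem_Ioi] at hmem
      have h1 : Ht ω lam dA c x A B 1 * r = Rrem ω lam dA c A B r x := by
        rw [← Ht_linear hls hωs hODE hi hx A B hmem, hev r]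
      rw [abs_le]
      have := abs_le.mp hb.2
      rw [h1]
      exact ⟨this.1, this.2⟩
    -- Case 2: the vector field is nonzero somewhere on the ball
    · push_neg at hd0
      obtain ⟨z₀, hz₀ball, C₀, hC₀⟩ := hd0
      have hz₀dom : z₀ ∈ sphDom := hball hz₀ball
      have hv : ContDiffAt ℝ 1 dA z₀ := by
        rw [contDiffAt_pi]
        intro i
        exact ((hd i).contDiffAt (isOpen_sphDom.mem_nhds hz₀dom)).of_le (by simp)
      obtain ⟨γ, hγ0, ε, hε, hγ⟩ := hv.exists_forall_mem_closedBall_exists_eq_forall_mem_Ioo_hasDerivAt₀ (0:ℝ)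
      have hγcont0 : ContinuousAt γ 0 :=
        (hγ 0 (by constructor <;> linarith)).continuousAt
      have hmemV : ∀ᶠ t in nhds (0:ℝ), γ t ∈ Metric.ball x δ := by
        apply hγcont0.eventually_mem
        rw [hγ0]
        exact Metric.isOpen_ball.mem_nhds hz₀ball
      obtain ⟨η, hη, hηV⟩ := Metric.eventually_nhds_iff.mp hmemV
      set ε' := min (η/2) (ε/2) with hε'def
      have hε'pos : 0 < ε' := lt_min (by linarith) (by linarith)
      set I := Set.Icc (0:ℝ) ε' with hIdef
      have hsubIoo : I ⊆ Set.Ioo (0-ε) (0+ε) := by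
        intro t ht
        have h2 : t ≤ ε/2 := le_trans ht.2 (min_le_right _ _)
        exact ⟨by linarith [ht.1], by linarith⟩
      have hγV : ∀ t ∈ I, γ t ∈ Metric.ball x δ := by
        intro t ht
        apply hηV
        rw [Real.dist_eq, sub_zero, abs_of_nonneg ht.1]
        exact lt_of_le_of_lt (le_trans ht.2 (min_le_left _ _)) (by linarith)
      have hγdom : ∀ t ∈ I, γ t ∈ sphDom := fun t ht => hball (hγV t ht)
      have hγder : ∀ t ∈ I, HasDerivAt γ (dA (γ t)) t := fun t ht => hγ t (hsubIoo ht)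
      have hγcont : ContinuousOn γ I :=
        fun t ht => (hγder t ht).continuousAt.continuousWithinAt
      have hKzero : ∃ s ∈ I, Ht ω lam dA c (γ s) A B 1 = 0 := by
        by_contra hno
        push_neg at hno
        -- Baire category sets
        set S : ℕ → Set ℝ := fun n => ⋂ r ∈ Set.Ioc (0:ℝ) (1/(n+1:ℝ)),
          (I ∩ {t | |lam r (γ t) A B| ≤ (n+1:ℝ) * r ^ 3}
            ∩ (I ∩ {t | |Rrem ω lam dA c A B r (γ t)| ≤ (n+1:ℝ) * r ^ 3})) with hSdef
        have hSsub : ∀ n, S n ⊆ I := by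
          intro n t ht
          have h1 := Set.mem_iInter₂.mp ht (1/(n+1:ℝ))
            ⟨by positivity, le_refl _⟩
          exact h1.1.1
        have hSclosed : ∀ n, IsClosed (S n) := by
          intro n
          apply isClosed_biInter
          intro r hr
          have hrpos : 0 < r := hr.1
          have hcont1 : ContinuousOn (fun t => |lam r (γ t) A B|) I :=
            (((contOn_lam_fixed hls hωs hd hc hrpos A B).comp hγcont hγdom).abs)
          have hcont2 : ContinuousOn (fun t => |Rrem ω lam dA c A B r (γ t)|) I :=
            (((contOn_Rrem hls hωs hd hc hrpos A B).comp hγcont hγdom).abs)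
          have hc1 : IsClosed (I ∩ (fun t => |lam r (γ t) A B|) ⁻¹'
              Set.Iic ((n+1:ℝ) * r ^ 3)) :=
            hcont1.preimage_isClosed_of_isClosed isClosed_Icc isClosed_Iic
          have hc2 : IsClosed (I ∩ (fun t => |Rrem ω lam dA c A B r (γ t)|) ⁻¹'
              Set.Iic ((n+1:ℝ) * r ^ 3)) :=
            hcont2.preimage_isClosed_of_isClosed isClosed_Icc isClosed_Iic
          exact hc1.inter hc2
        have hScover : ∀ t ∈ I, ∃ n, t ∈ S n := by
          intro t ht
          obtain ⟨M, hM0, hMev⟩ := lam_Rrem_eventually_bound (ω:=ω) (lam:=lam) (dA:=dA)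
            (c:=c) hlamO hωO (γ t) A B
          rw [Filter.Eventually] at hMev
          obtain ⟨δ₂, hδ₂, hP⟩ := Metric.mem_nhdsWithin_iff.mp hMev
          obtain ⟨n, hn⟩ := exists_nat_gt (max M (1/δ₂))
          refine ⟨n, Set.mem_iInter₂.mpr fun r hr => ?_⟩
          have hrpos : 0 < r := hr.1
          have hnM : M ≤ (n+1:ℝ) := by
            have := le_max_left M (1/δ₂); push_cast; nlinarith [hn]
          have hrδ : r < δ₂ := by
            have h1 : (1:ℝ)/δ₂ < n := lt_of_le_of_lt (le_max_right _ _) hn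
            have h2 : r ≤ 1/(n+1:ℝ) := hr.2
            have hn1 : (0:ℝ) < n + 1 := by positivity
            rw [div_lt_iff₀ hδ₂] at h1
            rw [le_div_iff₀ hn1] at h2
            nlinarith
          have hmem2 : r ∈ Metric.ball (0:ℝ) δ₂ ∩ Set.Ioi 0 := by
            constructor
            · rw [Metric.mem_ball, Real.dist_eq, sub_zero, abs_of_pos hrpos]; exact hrδ
            · exact hrpos
          have hPr := hP hmem2
          have hr3 : (0:ℝ) ≤ r ^ 3 := by positivity
          have hb1 := hPr.1.trans (mul_le_mul_of_nonneg_right hnM hr3)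
          have hb2 := hPr.2.trans (mul_le_mul_of_nonneg_right hnM hr3)
          exact ⟨⟨ht, hb1⟩, ⟨ht, hb2⟩⟩
        -- Baire category theorem on the complete space I
        have hIne : (0:ℝ) ∈ I := Set.left_mem_Icc.mpr hε'pos.le
        haveI : Nonempty I := ⟨⟨0, hIne⟩⟩
        haveI : CompleteSpace I := isClosed_Icc.completeSpace_coe
        have hUcover : (⋃ n, (Subtype.val ⁻¹' S n : Set I)) = Set.univ := by
          ext t
          simp only [Set.mem_iUnion, Set.mem_univ, iff_true, Set.mem_preimage]
          exact hScover t t.2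
        obtain ⟨n, hint⟩ := nonempty_interior_of_iUnion_of_closed
          (fun n => (hSclosed n).preimage continuous_subtype_val) hUcover
        obtain ⟨tc, hintm⟩ := hint
        rw [mem_interior_iff_mem_nhds, nhds_subtype_eq_comap, Filter.mem_comap] at hintm
        obtain ⟨W, hW, hWsub⟩ := hintm
        obtain ⟨η₂, hη₂, hball₂⟩ := Metric.mem_nhds_iff.mp hW
        set t₀ := (tc : ℝ) with ht₀def
        have ht₀I : t₀ ∈ I := tc.2
        have hSn : ∀ s ∈ I, |s - t₀| < η₂ → s ∈ S n := by
          intro s hsI hclose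
          have h1 : (⟨s, hsI⟩ : I) ∈ Subtype.val ⁻¹' W := by
            apply hball₂
            rw [Metric.mem_ball, Real.dist_eq]
            exact hclose
          exact hWsub h1
        set s₀ := max 0 (t₀ - η₂/2) with hs₀def
        set s₁ := min ε' (t₀ + η₂/2) with hs₁def
        have hs01 : s₀ < s₁ := by
          apply max_lt
          · exact lt_min hε'pos (by linarith [ht₀I.1])
          · exact lt_min (by linarith [ht₀I.2]) (by linarith)
        have hIccI : Set.Icc s₀ s₁ ⊆ I := by
          intro s hs
          exact ⟨le_trans (le_max_left _ _) hs.1, le_trans hs.2 (min_le_left _ _)⟩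
        have hIccS : Set.Icc s₀ s₁ ⊆ S n := by
          intro s hs
          apply hSn s (hIccI hs)
          rw [abs_sub_lt_iff]
          constructor
          · have := hs.2; have h2 : s ≤ t₀ + η₂/2 := le_trans this (min_le_right _ _)
            linarith
          · have := hs.1; have h2 : t₀ - η₂/2 ≤ s := le_trans (le_max_right _ _) this
            linarith
        have hSmem : ∀ s ∈ Set.Icc s₀ s₁, ∀ r ∈ Set.Ioc (0:ℝ) (1/(n+1:ℝ)),
            |lam r (γ s) A B| ≤ (n+1:ℝ) * r ^ 3
              ∧ |Rrem ω lam dA c A B r (γ s)| ≤ (n+1:ℝ) * r ^ 3 := by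
          intro s hs r hr
          have := Set.mem_iInter₂.mp (hIccS hs) r hr
          exact ⟨this.1.2, this.2.2⟩
        -- the derivative of lam along the flow
        have hψ : ∀ r ∈ Set.Ioc (0:ℝ) (1/(n+1:ℝ)), ∀ s ∈ Set.Icc s₀ s₁,
            HasDerivAt (fun u => lam r (γ u) A B)
              (Ht ω lam dA c (γ s) A B 1 * r - Rrem ω lam dA c A B r (γ s)) s := by
          intro r hr s hs
          have hrpos := hr.1
          have hsI : s ∈ I := hIccI hs
          have hdiff := fam_space_diffAt (hls A B) hrpos (γ s)
          have hder := hdiff.hasFDerivAt.comp_hasDerivAt s (hγder s hsI)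
          have hval := fderiv_apply_vec hdiff (dA (γ s))
          have hKid : dA (γ s) 0 * pd 0 (fun z => lam r z A B) (γ s)
              + dA (γ s) 1 * pd 1 (fun z => lam r z A B) (γ s)
              = Ht ω lam dA c (γ s) A B 1 * r - Rrem ω lam dA c A B r (γ s) := by
            have h1 := Ht_split ω lam dA c (γ s) A B r
            have h2 := Ht_linear hls hωs hODE hi (hγdom s hsI) A B hrpos
            rw [h2] at h1
            simp only [Fin.sum_univ_two] at h1
            linarith
          have hmain : HasDerivAt (fun u => lam r (γ u) A B)
              (fderiv ℝ (fun y => lam r y A B) (γ s) (dA (γ s))) s := by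
            simpa [Function.comp_def] using hder
          rw [hval] at hmain
          have hvfix : dA (γ s) 0 * pd 0 (fun y => lam r y A B) (γ s)
              + dA (γ s) 1 * pd 1 (fun y => lam r y A B) (γ s)
              = Ht ω lam dA c (γ s) A B 1 * r - Rrem ω lam dA c A B r (γ s) := hKid
          rw [hvfix] at hmain
          exact hmain
        -- the function K ∘ γ is continuous and has no zero on [s₀, s₁]
        have hKγcont : ContinuousOn (fun s => Ht ω lam dA c (γ s) A B 1)
            (Set.Icc s₀ s₁) :=
          hKcont.comp (hγcont.mono hIccI) (fun s hs => hγdom s (hIccI hs))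
        have hneq : ∀ s ∈ Set.Icc s₀ s₁, Ht ω lam dA c (γ s) A B 1 ≠ 0 :=
          fun s hs => hno s (hIccI hs)
        have hsign : (∀ s ∈ Set.Icc s₀ s₁, 0 < Ht ω lam dA c (γ s) A B 1)
            ∨ (∀ s ∈ Set.Icc s₀ s₁, Ht ω lam dA c (γ s) A B 1 < 0) := by
          by_contra hcon
          push_neg at hcon
          obtain ⟨⟨s₂, hs₂, hKs₂⟩, ⟨s₃, hs₃, hKs₃⟩⟩ := hcon
          have hK2 : Ht ω lam dA c (γ s₂) A B 1 < 0 :=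
            lt_of_le_of_ne hKs₂ (hneq s₂ hs₂)
          have hK3 : 0 < Ht ω lam dA c (γ s₃) A B 1 :=
            lt_of_le_of_ne hKs₃ (Ne.symm (hneq s₃ hs₃))
          have hsub : Set.uIcc s₂ s₃ ⊆ Set.Icc s₀ s₁ := Set.uIcc_subset_Icc hs₂ hs₃
          have him := intermediate_value_uIcc (hKγcont.mono hsub)
          have h0mem : (0:ℝ) ∈ Set.uIcc (Ht ω lam dA c (γ s₂) A B 1)
              (Ht ω lam dA c (γ s₃) A B 1) :=
            Set.mem_uIcc.mpr (Or.inl ⟨hK2.le, hK3.le⟩)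
          obtain ⟨s₄, hs₄mem, hs₄⟩ := him h0mem
          exact hneq s₄ (hsub hs₄mem) hs₄
        have hr₀pos : (0:ℝ) < 1/(n+1:ℝ) := by positivity
        have hCnn : (0:ℝ) ≤ (n+1:ℝ) := by positivity
        rcases hsign with hpos | hneg
        · obtain ⟨smin, hsminmem, hmin⟩ := isCompact_Icc.exists_isMinOn
            (Set.nonempty_Icc.mpr hs01.le) hKγcont
          have hm : 0 < Ht ω lam dA c (γ smin) A B 1 := hpos smin hsminmem
          apply no_lin_growth hs01 hm hCnn hr₀pos
            (fun r u => lam r (γ u) A B)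
            (fun r u => Ht ω lam dA c (γ u) A B 1 * r - Rrem ω lam dA c A B r (γ u))
          · exact fun r hr u hu => hψ r hr u hu
          · intro r hr u hu
            have hRb := abs_le.mp (hSmem u hu r hr).2
            have hKb : Ht ω lam dA c (γ smin) A B 1 ≤ Ht ω lam dA c (γ u) A B 1 :=
              hmin hu
            nlinarith [hr.1.le]
          · exact fun r hr u hu => (hSmem u hu r hr).1
        · obtain ⟨smax, hsmaxmem, hmax⟩ := isCompact_Icc.exists_isMaxOn
            (Set.nonempty_Icc.mpr hs01.le) hKγcont
          have hm : 0 < -Ht ω lam dA c (γ smax) A B 1 := by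
            have := hneg smax hsmaxmem; linarith
          apply no_lin_growth hs01 hm hCnn hr₀pos
            (fun r u => -lam r (γ u) A B)
            (fun r u => -(Ht ω lam dA c (γ u) A B 1 * r - Rrem ω lam dA c A B r (γ u)))
          · exact fun r hr u hu => (hψ r hr u hu).neg
          · intro r hr u hu
            have hRb := abs_le.mp (hSmem u hu r hr).2
            have hKb : Ht ω lam dA c (γ u) A B 1 ≤ Ht ω lam dA c (γ smax) A B 1 :=
              hmax hu
            nlinarith [hr.1.le]
          · intro r hr u hu
            rw [abs_neg]
            exact (hSmem u hu r hr).1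
      obtain ⟨s, hsmem, hKs⟩ := hKzero
      exact ⟨γ s, hγV s hsmem, hKs⟩
  -- conclude by continuity
  by_contra hKx
  have hcontx : ContinuousAt (fun y => Ht ω lam dA c y A B 1) x :=
    hKcont.continuousAt (isOpen_sphDom.mem_nhds hx)
  have hev : ∀ᶠ y in nhds x, |Ht ω lam dA c y A B 1 - Ht ω lam dA c x A B 1|
      < |Ht ω lam dA c x A B 1| := by
    have := hcontx.eventually_mem (Metric.isOpen_ball.mem_nhds
      (by rw [Metric.mem_ball, dist_self]; exact abs_pos.mpr hKx))
    filter_upwards [this] with y hy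
    rw [Metric.mem_ball, Real.dist_eq] at hy
    exact hy
  obtain ⟨δ₁, hδ₁, hball₁⟩ := Metric.eventually_nhds_iff.mp hev
  obtain ⟨δ₃, hδ₃, hball₃⟩ := Metric.mem_nhds_iff.mp (isOpen_sphDom.mem_nhds hx)
  set δ := min δ₁ δ₃ with hδdef
  have hδpos : 0 < δ := lt_min hδ₁ hδ₃
  obtain ⟨z, hzball, hz0⟩ := hdense δ hδpos
    (Set.Subset.trans (Metric.ball_subset_ball (min_le_right _ _)) hball₃)
  have hzd : dist z x < δ₁ := lt_of_lt_of_le (Metric.mem_ball.mp hzball) (min_le_left _ _)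
  have hlt := hball₁ hzd
  rw [hz0, zero_sub, abs_neg] at hlt
  exact lt_irrefl _ hlt

end KZero
end KIDaux
open Set Filter

/-- equivalence of the two forms of the reduced KID equations on `C_{i⁻}`:
with `λ_{AB}` the unique `O(r³)`-solution of `(∂_r - r⁻¹)λ_{AB} = -2ω_{AB}`, the equation
(i) in terms of `ω` holds iff the equation (ii) in terms of `λ` holds. -/
theorem reduced_KID_equivalent_forms
    (ω lam : ℝ → Pt2 → Fin 2 → Fin 2 → ℝ)
    (hωsmooth : ∀ A B, ContDiffOn ℝ (⊤ : ℕ∞) (fun p : ℝ × Pt2 => ω p.1 p.2 A B)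
        (Set.Ioi 0 ×ˢ Set.univ))
    (hlamsmooth : ∀ A B, ContDiffOn ℝ (⊤ : ℕ∞) (fun p : ℝ × Pt2 => lam p.1 p.2 A B)
        (Set.Ioi 0 ×ˢ Set.univ))
    (hωsymm : ∀ r x A B, ω r x A B = ω r x B A)
    (hωtracefree : ∀ r, ∀ x ∈ sphDom, (∑ A, ∑ B, sphInv x A B * ω r x A B) = 0)
    (hωO : ∀ x A B, (fun r => ω r x A B) =O[nhdsWithin 0 (Set.Ioi 0)] fun r => r ^ 2)
    (hlamO : ∀ x A B, (fun r => lam r x A B) =O[nhdsWithin 0 (Set.Ioi 0)] fun r => r ^ 3)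
    (hODE : ∀ r > (0 : ℝ), ∀ x A B,
        deriv (fun t => lam t x A B) r - r⁻¹ * lam r x A B = -2 * ω r x A B)
    (dA : Pt2 → Fin 2 → ℝ) (hdsmooth : ∀ A, ContDiffOn ℝ (⊤ : ℕ∞) (fun x => dA x A) sphDom)
    (hdCKV : ∀ x ∈ sphDom, ∀ A B,
        lieMetric dA x A B = sphDiv dA x * sphMetric x A B)
    (c : Pt2 → ℝ) (hc : ContDiffOn ℝ (⊤ : ℕ∞) c sphDom) :
    (∀ r > (0 : ℝ), ∀ x ∈ sphDom, ∀ A B,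
        lie2 dA (ω r) x A B
            - (1 / 2) * r * sphDiv dA x * deriv (fun t => ω t x A B) r
            + c x * r ^ 2 * deriv (fun t => ω t x A B) r
            + (1 / 2) * c x * lam r x A B = 0)
      ↔ (∀ r > (0 : ℝ), ∀ x ∈ sphDom, ∀ A B,
          lie2 dA (lam r) x A B
              - ((1 / 2) * r * sphDiv dA x - c x * r ^ 2) * deriv (fun t => lam t x A B) r
              + ((1 / 2) * sphDiv dA x - 2 * c x * r) * lam r x A B = 0) := by
  constructor
  · -- (i) ⇒ (ii)
    intro hi r hr x hx A B
    have hK := KIDaux.K_zero (ω := ω) (lam := lam) (dA := dA) (c := c)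
      (hls := hlamsmooth) (hωs := hωsmooth) (hODE := hODE) (hd := hdsmooth) (hc := hc)
      (hlamO := hlamO) (hωO := hωO) (hi := hi) hx A B
    have hlin := KIDaux.Ht_linear (ω := ω) (lam := lam) (dA := dA) (c := c)
      (hls := hlamsmooth) (hωs := hωsmooth) (hODE := hODE) (hi := hi) hx A B hr
    rw [hK, zero_mul] at hlin
    rw [KIDaux.Ht_eq (ω := ω) (lam := lam) (dA := dA) (c := c)
      (hls := hlamsmooth) (hωs := hωsmooth) (hODE := hODE) hr x A B] at hlin
    linarith [hlin]
  · -- (ii) ⇒ (i)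
    intro hii r hr x hx A B
    have hzero : ∀ t, 0 < t → KIDaux.Ht ω lam dA c x A B t = 0 := by
      intro t ht
      rw [KIDaux.Ht_eq (ω := ω) (lam := lam) (dA := dA) (c := c)
        (hls := hlamsmooth) (hωs := hωsmooth) (hODE := hODE) ht x A B]
      exact hii t ht x hx A B
    have hH := KIDaux.Ht_hasDeriv (ω := ω) (lam := lam) (dA := dA) (c := c)
      (hls := hlamsmooth) (hωs := hωsmooth) (hODE := hODE) hr x A B
    have hH0 : HasDerivAt (KIDaux.Ht ω lam dA c x A B) 0 r := by
      have hev : KIDaux.Ht ω lam dA c x A B =ᶠ[nhds r] (fun _ => 0) := by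
        filter_upwards [Ioi_mem_nhds hr] with t ht
        exact hzero t ht
      exact (hasDerivAt_const r 0).congr_of_eventuallyEq hev
    have huniq := hH.unique hH0
    rw [hzero r hr] at huniq
    have h0 : r⁻¹ * (0:ℝ) = 0 := mul_zero _
    rw [h0] at huniq
    linarith [huniq]
end
end

section
/- Suppose X and X̂ are vector fields on a pseudo-Riemannian manifold (M, g) of dimension d satisfying the 'unphysical Killing equations': ∇_{(μ}X_{ν)} = Y g_{μν} with Y = (1/d)∇_κ X^κ and X^κ∇_κΘ = ΘY, and similarly for X̂ with Ŷ, for a fixed smooth function Θ. Then the Lie bracket [X, X̂] also satisfies both equations, with associated function Y' = X^κ∇_κŶ − X̂^κ∇_κY. In other words, the solutions of the unphysical Killing equations form a Lie algebra of vector fields. -/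
noncomputable section

section UKHelpers
variable {d : ℕ}

lemma dA {f : Pt d → ℝ} (hf : ContDiff ℝ (⊤ : ℕ∞) f) (x : Pt d) : DifferentiableAt ℝ f x :=
  (hf.differentiable (by simp)).differentiableAt

lemma contDiff_pd {f : Pt d → ℝ} (hf : ContDiff ℝ (⊤ : ℕ∞) f) (i : Fin d) :
    ContDiff ℝ (⊤ : ℕ∞) fun x => pd i f x := by
  have h : ContDiff ℝ (⊤ : ℕ∞) (fderiv ℝ f) := hf.fderiv_right (by simp)
  exact (ContinuousLinearMap.apply ℝ ℝ ((Pi.single i 1 : Pt d))).contDiff.comp h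

lemma pd_add {f g : Pt d → ℝ} {x : Pt d} (hf : DifferentiableAt ℝ f x)
    (hg : DifferentiableAt ℝ g x) (i : Fin d) :
    pd i (fun y => f y + g y) x = pd i f x + pd i g x := by
  simp [pd, fderiv_fun_add hf hg]

lemma pd_sub {f g : Pt d → ℝ} {x : Pt d} (hf : DifferentiableAt ℝ f x)
    (hg : DifferentiableAt ℝ g x) (i : Fin d) :
    pd i (fun y => f y - g y) x = pd i f x - pd i g x := by
  simp [pd, fderiv_fun_sub hf hg]

lemma pd_mul {f g : Pt d → ℝ} {x : Pt d} (hf : DifferentiableAt ℝ f x)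
    (hg : DifferentiableAt ℝ g x) (i : Fin d) :
    pd i (fun y => f y * g y) x = pd i f x * g x + f x * pd i g x := by
  simp [pd, fderiv_fun_mul hf hg]; ring

lemma pd_const_mul {f : Pt d → ℝ} {x : Pt d} (hf : DifferentiableAt ℝ f x) (c : ℝ) (i : Fin d) :
    pd i (fun y => c * f y) x = c * pd i f x := by
  simp [pd, fderiv_const_mul hf c]

lemma pd_sum {ι : Type*} {s : Finset ι} {F : ι → Pt d → ℝ} {x : Pt d}
    (hF : ∀ k ∈ s, DifferentiableAt ℝ (F k) x) (i : Fin d) :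
    pd i (fun y => ∑ k ∈ s, F k y) x = ∑ k ∈ s, pd i (F k) x := by
  simp [pd, fderiv_fun_sum hF]

lemma pd_comm {f : Pt d → ℝ} (hf : ContDiff ℝ (⊤ : ℕ∞) f) (i j : Fin d) (x : Pt d) :
    pd i (fun y => pd j f y) x = pd j (fun y => pd i f y) x := by
  have hs : IsSymmSndFDerivAt ℝ f x :=
    (hf.contDiffAt).isSymmSndFDerivAt (by rw [minSmoothness_of_isRCLikeNormedField]; exact WithTop.coe_le_coe.2 (le_top : (2 : ℕ∞) ≤ ⊤))
  have hdf : DifferentiableAt ℝ (fderiv ℝ f) x :=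
    ((hf.fderiv_right (m := (⊤ : ℕ∞)) ((by simp))).differentiable (by simp)).differentiableAt
  have key : ∀ v w : Pt d, fderiv ℝ (fun y => fderiv ℝ f y v) x w
      = fderiv ℝ (fderiv ℝ f) x w v := by
    intro v w
    rw [fderiv_clm_apply hdf (differentiableAt_const v)]
    simp
  simp only [pd, key]
  exact hs _ _

lemma ginv_g {g ginv : Pt d → Matrix (Fin d) (Fin d) ℝ}
    (hinv : ∀ x, g x * ginv x = 1) (x : Pt d) (σ lam : Fin d) :
    ∑ κ, ginv x σ κ * g x κ lam = if σ = lam then 1 else 0 := by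
  have h : ginv x * g x = 1 := mul_eq_one_comm.mp (hinv x)
  have := congrArg (fun M => M σ lam) h
  simpa [Matrix.mul_apply, Matrix.one_apply] using this

lemma g_ginv {g ginv : Pt d → Matrix (Fin d) (Fin d) ℝ}
    (hinv : ∀ x, g x * ginv x = 1) (x : Pt d) (σ lam : Fin d) :
    ∑ κ, g x σ κ * ginv x κ lam = if σ = lam then 1 else 0 := by
  have := congrArg (fun M => M σ lam) (hinv x)
  simpa [Matrix.mul_apply, Matrix.one_apply] using this

lemma ginv_symm {g ginv : Pt d → Matrix (Fin d) (Fin d) ℝ}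
    (hsymm : ∀ x μ ν, g x μ ν = g x ν μ)
    (hinv : ∀ x, g x * ginv x = 1) (x : Pt d) (μ ν : Fin d) :
    ginv x μ ν = ginv x ν μ := by
  have h1 : ginv x μ ν = ∑ a, ∑ b, ginv x a ν * (g x a b * ginv x b μ) := by
    calc ginv x μ ν = ∑ a, (if a = μ then 1 else 0) * ginv x a ν := by simp
      _ = ∑ a, (∑ b, g x a b * ginv x b μ) * ginv x a ν :=
          Finset.sum_congr rfl fun a _ => by rw [g_ginv hinv x a μ]
      _ = ∑ a, ∑ b, ginv x a ν * (g x a b * ginv x b μ) :=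
          Finset.sum_congr rfl fun a _ => by rw [Finset.sum_mul]; exact Finset.sum_congr rfl fun b _ => by ring
  have h2 : ginv x ν μ = ∑ a, ∑ b, ginv x a ν * (g x a b * ginv x b μ) := by
    calc ginv x ν μ = ∑ b, (if b = ν then 1 else 0) * ginv x b μ := by simp
      _ = ∑ b, (∑ a, g x b a * ginv x a ν) * ginv x b μ :=
          Finset.sum_congr rfl fun b _ => by rw [g_ginv hinv x b ν]
      _ = ∑ b, ∑ a, ginv x a ν * (g x a b * ginv x b μ) := by
          refine Finset.sum_congr rfl fun b _ => ?_
          rw [Finset.sum_mul]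
          exact Finset.sum_congr rfl fun a _ => by rw [hsymm x b a]; ring
      _ = ∑ a, ∑ b, ginv x a ν * (g x a b * ginv x b μ) := Finset.sum_comm
  rw [h1, h2]

lemma sum_sym {F G : Fin d → Fin d → ℝ}
    (h : ∀ κ lam, F κ lam + F lam κ = G κ lam + G lam κ) :
    ∑ κ, ∑ lam, F κ lam = ∑ κ, ∑ lam, G κ lam := by
  have e1 : ∑ κ, ∑ lam, F κ lam = ∑ κ, ∑ lam, F lam κ := Finset.sum_comm
  have e2 : ∑ κ, ∑ lam, G κ lam = ∑ κ, ∑ lam, G lam κ := Finset.sum_comm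
  have h2 : (∑ κ, ∑ lam, F κ lam) + (∑ κ, ∑ lam, F lam κ)
      = (∑ κ, ∑ lam, G κ lam) + (∑ κ, ∑ lam, G lam κ) := by
    simp only [← Finset.sum_add_distrib]
    exact Finset.sum_congr rfl fun κ _ => Finset.sum_congr rfl fun lam _ => h κ lam
  linarith [e1, e2, h2]

lemma chr_contract {g ginv : Pt d → Matrix (Fin d) (Fin d) ℝ}
    (hsymm : ∀ x μ ν, g x μ ν = g x ν μ)
    (hinv : ∀ x, g x * ginv x = 1) (x : Pt d) (μ ν : Fin d) (W : Fin d → ℝ) :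
    ∑ κ, Chr g ginv κ μ ν x * (∑ lam, g x κ lam * W lam)
      = ∑ lam, (1/2) * (pd μ (fun y => g y ν lam) x + pd ν (fun y => g y μ lam) x
          - pd lam (fun y => g y μ ν) x) * W lam := by
  have step1 : ∀ κ : Fin d, Chr g ginv κ μ ν x * (∑ lam, g x κ lam * W lam)
      = ∑ α, ∑ lam, (ginv x κ α * g x κ lam) *
          ((1/2) * (pd μ (fun y => g y ν α) x + pd ν (fun y => g y μ α) x
            - pd α (fun y => g y μ ν) x) * W lam) := by
    intro κ
    unfold Chr
    simp only [Finset.mul_sum, Finset.sum_mul]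
    conv_lhs => rw [Finset.sum_comm]
    refine Finset.sum_congr rfl fun α _ => ?_
    refine Finset.sum_congr rfl fun lam _ => ?_
    ring
  calc ∑ κ, Chr g ginv κ μ ν x * (∑ lam, g x κ lam * W lam)
      = ∑ κ, ∑ α, ∑ lam, (ginv x κ α * g x κ lam) *
          ((1/2) * (pd μ (fun y => g y ν α) x + pd ν (fun y => g y μ α) x
            - pd α (fun y => g y μ ν) x) * W lam) := Finset.sum_congr rfl fun κ _ => step1 κ
    _ = ∑ α, ∑ κ, ∑ lam, (ginv x κ α * g x κ lam) *
          ((1/2) * (pd μ (fun y => g y ν α) x + pd ν (fun y => g y μ α) x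
            - pd α (fun y => g y μ ν) x) * W lam) := Finset.sum_comm
    _ = ∑ α, ∑ lam, ∑ κ, (ginv x κ α * g x κ lam) *
          ((1/2) * (pd μ (fun y => g y ν α) x + pd ν (fun y => g y μ α) x
            - pd α (fun y => g y μ ν) x) * W lam) :=
        Finset.sum_congr rfl fun α _ => Finset.sum_comm
    _ = ∑ α, ∑ lam, (if α = lam then 1 else 0) *
          ((1/2) * (pd μ (fun y => g y ν α) x + pd ν (fun y => g y μ α) x
            - pd α (fun y => g y μ ν) x) * W lam) := by
        refine Finset.sum_congr rfl fun α _ => Finset.sum_congr rfl fun lam _ => ?_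
        rw [← Finset.sum_mul]
        congr 1
        rw [← ginv_g hinv x α lam]
        exact Finset.sum_congr rfl fun κ _ => by rw [ginv_symm hsymm hinv x κ α]
    _ = ∑ lam, (1/2) * (pd μ (fun y => g y ν lam) x + pd ν (fun y => g y μ lam) x
          - pd lam (fun y => g y μ ν) x) * W lam := by
        rw [Finset.sum_comm]
        refine Finset.sum_congr rfl fun lam _ => ?_
        simp

/-- The Lie derivative of the metric along `V`, in coordinates. -/
def LieG {d : ℕ} (g : Pt d → Matrix (Fin d) (Fin d) ℝ) (V : Pt d → Fin d → ℝ)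
    (μ ν : Fin d) (x : Pt d) : ℝ :=
  (∑ κ, V x κ * pd κ (fun y => g y μ ν) x)
  + (∑ κ, pd μ (fun y => V y κ) x * g x κ ν)
  + ∑ κ, pd ν (fun y => V y κ) x * g x μ κ

lemma covD1_lower_expand {g ginv : Pt d → Matrix (Fin d) (Fin d) ℝ}
    (hg : ∀ μ ν, ContDiff ℝ (⊤ : ℕ∞) fun x => g x μ ν)
    (hsymm : ∀ x μ ν, g x μ ν = g x ν μ)
    (hinv : ∀ x, g x * ginv x = 1)
    {V : Pt d → Fin d → ℝ} (hV : ∀ κ, ContDiff ℝ (⊤ : ℕ∞) fun x => V x κ)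
    (x : Pt d) (a b : Fin d) :
    covD1 g ginv (lowerIdx g V) a b x
      = ∑ κ, (pd a (fun y => g y b κ) x * V x κ + g x b κ * pd a (fun y => V y κ) x
          - (1/2) * (pd a (fun y => g y b κ) x + pd b (fun y => g y a κ) x
              - pd κ (fun y => g y a b) x) * V x κ) := by
  have hpd : pd a (fun y => lowerIdx g V y b) x
      = ∑ κ, (pd a (fun y => g y b κ) x * V x κ + g x b κ * pd a (fun y => V y κ) x) := by
    have : (fun y => lowerIdx g V y b) = fun y => ∑ κ, g y b κ * V y κ := rfl
    rw [this, pd_sum (fun k _ => ((hg b k).mul (hV k)).differentiable (by simp) |>.differentiableAt) a]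
    exact Finset.sum_congr rfl fun κ _ => pd_mul (dA (hg b κ) x) (dA (hV κ) x) a
  have hchr : ∑ κ, Chr g ginv κ a b x * lowerIdx g V x κ
      = ∑ κ, (1/2) * (pd a (fun y => g y b κ) x + pd b (fun y => g y a κ) x
          - pd κ (fun y => g y a b) x) * V x κ := chr_contract hsymm hinv x a b (V x)
  unfold covD1
  rw [hpd, hchr, ← Finset.sum_sub_distrib]

lemma lieG_eq {g ginv : Pt d → Matrix (Fin d) (Fin d) ℝ}
    (hg : ∀ μ ν, ContDiff ℝ (⊤ : ℕ∞) fun x => g x μ ν)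
    (hsymm : ∀ x μ ν, g x μ ν = g x ν μ)
    (hinv : ∀ x, g x * ginv x = 1)
    {V : Pt d → Fin d → ℝ} (hV : ∀ κ, ContDiff ℝ (⊤ : ℕ∞) fun x => V x κ)
    (x : Pt d) (μ ν : Fin d) :
    covD1 g ginv (lowerIdx g V) μ ν x + covD1 g ginv (lowerIdx g V) ν μ x
      = LieG g V μ ν x := by
  have hpdsym : ∀ (i p q : Fin d), pd i (fun y => g y p q) x = pd i (fun y => g y q p) x := by
    intro i p q
    congr 1
    funext y
    exact hsymm y p q
  rw [covD1_lower_expand hg hsymm hinv hV x μ ν, covD1_lower_expand hg hsymm hinv hV x ν μ]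
  unfold LieG
  rw [← Finset.sum_add_distrib, ← Finset.sum_add_distrib, ← Finset.sum_add_distrib]
  refine Finset.sum_congr rfl fun κ _ => ?_
  rw [hpdsym κ ν μ, hsymm x ν κ, hsymm x μ κ]
  ring

lemma contDiff_vbracket {X Xh : Pt d → Fin d → ℝ}
    (hX : ∀ κ, ContDiff ℝ (⊤ : ℕ∞) fun x => X x κ) (hXh : ∀ κ, ContDiff ℝ (⊤ : ℕ∞) fun x => Xh x κ)
    (κ : Fin d) : ContDiff ℝ (⊤ : ℕ∞) fun x => vbracket X Xh x κ := by
  unfold vbracket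
  exact (ContDiff.sum fun lam _ => (hX lam).mul (contDiff_pd (hXh κ) lam)).sub
    (ContDiff.sum fun lam _ => (hXh lam).mul (contDiff_pd (hX κ) lam))

lemma pd_vbracket {X Xh : Pt d → Fin d → ℝ}
    (hX : ∀ κ, ContDiff ℝ (⊤ : ℕ∞) fun x => X x κ) (hXh : ∀ κ, ContDiff ℝ (⊤ : ℕ∞) fun x => Xh x κ)
    (σ κ : Fin d) (x : Pt d) :
    pd σ (fun y => vbracket X Xh y κ) x
      = ∑ lam, (pd σ (fun y => X y lam) x * pd lam (fun y => Xh y κ) x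
          + X x lam * pd σ (fun y => pd lam (fun z => Xh z κ) y) x
          - pd σ (fun y => Xh y lam) x * pd lam (fun y => X y κ) x
          - Xh x lam * pd σ (fun y => pd lam (fun z => X z κ) y) x) := by
  have h1 : ∀ lam : Fin d, DifferentiableAt ℝ (fun y => X y lam * pd lam (fun z => Xh z κ) y) x :=
    fun lam => dA ((hX lam).mul (contDiff_pd (hXh κ) lam)) x
  have h2 : ∀ lam : Fin d, DifferentiableAt ℝ (fun y => Xh y lam * pd lam (fun z => X z κ) y) x :=
    fun lam => dA ((hXh lam).mul (contDiff_pd (hX κ) lam)) x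
  have : (fun y => vbracket X Xh y κ)
      = fun y => (∑ lam, X y lam * pd lam (fun z => Xh z κ) y)
          - ∑ lam, Xh y lam * pd lam (fun z => X z κ) y := rfl
  rw [this, pd_sub (DifferentiableAt.fun_sum fun lam _ => h1 lam)
    (DifferentiableAt.fun_sum fun lam _ => h2 lam) σ,
    pd_sum (fun lam _ => h1 lam) σ, pd_sum (fun lam _ => h2 lam) σ,
    ← Finset.sum_sub_distrib]
  refine Finset.sum_congr rfl fun lam _ => ?_
  rw [pd_mul (dA (hX lam) x) (dA (contDiff_pd (hXh κ) lam) x) σ,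
    pd_mul (dA (hXh lam) x) (dA (contDiff_pd (hX κ) lam) x) σ]
  ring

lemma pd_lieG {g : Pt d → Matrix (Fin d) (Fin d) ℝ}
    (hg : ∀ μ ν, ContDiff ℝ (⊤ : ℕ∞) fun x => g x μ ν)
    {V : Pt d → Fin d → ℝ} (hV : ∀ κ, ContDiff ℝ (⊤ : ℕ∞) fun x => V x κ)
    (σ μ ν : Fin d) (x : Pt d) :
    pd σ (fun y => LieG g V μ ν y) x
      = ∑ lam, (pd σ (fun y => V y lam) x * pd lam (fun y => g y μ ν) x
          + V x lam * pd σ (fun y => pd lam (fun z => g z μ ν) y) x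
          + pd σ (fun y => pd μ (fun z => V z lam) y) x * g x lam ν
          + pd μ (fun y => V y lam) x * pd σ (fun y => g y lam ν) x
          + pd σ (fun y => pd ν (fun z => V z lam) y) x * g x μ lam
          + pd ν (fun y => V y lam) x * pd σ (fun y => g y μ lam) x) := by
  have h1 : ∀ lam : Fin d, DifferentiableAt ℝ (fun y => V y lam * pd lam (fun z => g z μ ν) y) x :=
    fun lam => dA ((hV lam).mul (contDiff_pd (hg μ ν) lam)) x
  have h2 : ∀ lam : Fin d, DifferentiableAt ℝ (fun y => pd μ (fun z => V z lam) y * g y lam ν) x :=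
    fun lam => dA ((contDiff_pd (hV lam) μ).mul (hg lam ν)) x
  have h3 : ∀ lam : Fin d, DifferentiableAt ℝ (fun y => pd ν (fun z => V z lam) y * g y μ lam) x :=
    fun lam => dA ((contDiff_pd (hV lam) ν).mul (hg μ lam)) x
  have : (fun y => LieG g V μ ν y)
      = fun y => ((∑ lam, V y lam * pd lam (fun z => g z μ ν) y)
          + ∑ lam, pd μ (fun z => V z lam) y * g y lam ν)
          + ∑ lam, pd ν (fun z => V z lam) y * g y μ lam := rfl
  rw [this, pd_add (((DifferentiableAt.fun_sum fun lam _ => h1 lam)).fun_add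
      (DifferentiableAt.fun_sum fun lam _ => h2 lam)) (DifferentiableAt.fun_sum fun lam _ => h3 lam) σ,
    pd_add (DifferentiableAt.fun_sum fun lam _ => h1 lam) (DifferentiableAt.fun_sum fun lam _ => h2 lam) σ,
    pd_sum (fun lam _ => h1 lam) σ, pd_sum (fun lam _ => h2 lam) σ, pd_sum (fun lam _ => h3 lam) σ,
    ← Finset.sum_add_distrib, ← Finset.sum_add_distrib]
  refine Finset.sum_congr rfl fun lam _ => ?_
  rw [pd_mul (dA (hV lam) x) (dA (contDiff_pd (hg μ ν) lam) x) σ,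
    pd_mul (dA (contDiff_pd (hV lam) μ) x) (dA (hg lam ν) x) σ,
    pd_mul (dA (contDiff_pd (hV lam) ν) x) (dA (hg μ lam) x) σ]
  ring

lemma lieG_bracket {g : Pt d → Matrix (Fin d) (Fin d) ℝ}
    (hg : ∀ μ ν, ContDiff ℝ (⊤ : ℕ∞) fun x => g x μ ν)
    {X Xh : Pt d → Fin d → ℝ}
    (hX : ∀ κ, ContDiff ℝ (⊤ : ℕ∞) fun x => X x κ) (hXh : ∀ κ, ContDiff ℝ (⊤ : ℕ∞) fun x => Xh x κ)
    (x : Pt d) (μ ν : Fin d) :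
    LieG g (fun y => vbracket X Xh y) μ ν x
      = ((∑ κ, X x κ * pd κ (fun y => LieG g Xh μ ν y) x)
          + (∑ κ, pd μ (fun y => X y κ) x * LieG g Xh κ ν x)
          + ∑ κ, pd ν (fun y => X y κ) x * LieG g Xh μ κ x)
        - ((∑ κ, Xh x κ * pd κ (fun y => LieG g X μ ν y) x)
          + (∑ κ, pd μ (fun y => Xh y κ) x * LieG g X κ ν x)
          + ∑ κ, pd ν (fun y => Xh y κ) x * LieG g X μ κ x) := by
  have hL : LieG g (fun y => vbracket X Xh y) μ ν x
      = ∑ κ, ∑ lam,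
        ((X x lam * pd lam (fun y => Xh y κ) x - Xh x lam * pd lam (fun y => X y κ) x)
            * pd κ (fun y => g y μ ν) x
          + (pd μ (fun y => X y lam) x * pd lam (fun y => Xh y κ) x
              + X x lam * pd μ (fun y => pd lam (fun z => Xh z κ) y) x
              - pd μ (fun y => Xh y lam) x * pd lam (fun y => X y κ) x
              - Xh x lam * pd μ (fun y => pd lam (fun z => X z κ) y) x) * g x κ ν
          + (pd ν (fun y => X y lam) x * pd lam (fun y => Xh y κ) x
              + X x lam * pd ν (fun y => pd lam (fun z => Xh z κ) y) x
              - pd ν (fun y => Xh y lam) x * pd lam (fun y => X y κ) x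
              - Xh x lam * pd ν (fun y => pd lam (fun z => X z κ) y) x) * g x μ κ) := by
    have e0 : LieG g (fun y => vbracket X Xh y) μ ν x
        = (∑ κ, vbracket X Xh x κ * pd κ (fun y => g y μ ν) x)
          + (∑ κ, pd μ (fun y => vbracket X Xh y κ) x * g x κ ν)
          + ∑ κ, pd ν (fun y => vbracket X Xh y κ) x * g x μ κ := rfl
    rw [e0]
    have eA : ∀ κ : Fin d, vbracket X Xh x κ * pd κ (fun y => g y μ ν) x
        = ∑ lam, (X x lam * pd lam (fun y => Xh y κ) x
            - Xh x lam * pd lam (fun y => X y κ) x) * pd κ (fun y => g y μ ν) x := by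
      intro κ
      rw [← Finset.sum_mul]
      congr 1
      rw [Finset.sum_sub_distrib]
      rfl
    have eB : ∀ κ : Fin d, pd μ (fun y => vbracket X Xh y κ) x * g x κ ν
        = ∑ lam, (pd μ (fun y => X y lam) x * pd lam (fun y => Xh y κ) x
            + X x lam * pd μ (fun y => pd lam (fun z => Xh z κ) y) x
            - pd μ (fun y => Xh y lam) x * pd lam (fun y => X y κ) x
            - Xh x lam * pd μ (fun y => pd lam (fun z => X z κ) y) x) * g x κ ν := by
      intro κ
      rw [pd_vbracket hX hXh μ κ x, Finset.sum_mul]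
    have eC : ∀ κ : Fin d, pd ν (fun y => vbracket X Xh y κ) x * g x μ κ
        = ∑ lam, (pd ν (fun y => X y lam) x * pd lam (fun y => Xh y κ) x
            + X x lam * pd ν (fun y => pd lam (fun z => Xh z κ) y) x
            - pd ν (fun y => Xh y lam) x * pd lam (fun y => X y κ) x
            - Xh x lam * pd ν (fun y => pd lam (fun z => X z κ) y) x) * g x μ κ := by
      intro κ
      rw [pd_vbracket hX hXh ν κ x, Finset.sum_mul]
    rw [Finset.sum_congr rfl fun κ _ => eA κ, Finset.sum_congr rfl fun κ _ => eB κ,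
      Finset.sum_congr rfl fun κ _ => eC κ]
    simp only [← Finset.sum_add_distrib]
  have hRX : ∀ (W Wh : Pt d → Fin d → ℝ), (∀ κ, ContDiff ℝ (⊤ : ℕ∞) fun x => W x κ) →
      (∀ κ, ContDiff ℝ (⊤ : ℕ∞) fun x => Wh x κ) →
      ((∑ κ, W x κ * pd κ (fun y => LieG g Wh μ ν y) x)
        + (∑ κ, pd μ (fun y => W y κ) x * LieG g Wh κ ν x)
        + ∑ κ, pd ν (fun y => W y κ) x * LieG g Wh μ κ x)
      = ∑ κ, ∑ lam,
          (W x κ * (pd κ (fun y => Wh y lam) x * pd lam (fun y => g y μ ν) x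
              + Wh x lam * pd κ (fun y => pd lam (fun z => g z μ ν) y) x
              + pd κ (fun y => pd μ (fun z => Wh z lam) y) x * g x lam ν
              + pd μ (fun y => Wh y lam) x * pd κ (fun y => g y lam ν) x
              + pd κ (fun y => pd ν (fun z => Wh z lam) y) x * g x μ lam
              + pd ν (fun y => Wh y lam) x * pd κ (fun y => g y μ lam) x)
            + pd μ (fun y => W y κ) x * (Wh x lam * pd lam (fun y => g y κ ν) x
              + pd κ (fun y => Wh y lam) x * g x lam ν
              + pd ν (fun y => Wh y lam) x * g x κ lam)
            + pd ν (fun y => W y κ) x * (Wh x lam * pd lam (fun y => g y μ κ) x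
              + pd μ (fun y => Wh y lam) x * g x lam κ
              + pd κ (fun y => Wh y lam) x * g x μ lam)) := by
    intro W Wh hW hWh
    have eA : ∀ κ : Fin d, W x κ * pd κ (fun y => LieG g Wh μ ν y) x
        = ∑ lam, W x κ * (pd κ (fun y => Wh y lam) x * pd lam (fun y => g y μ ν) x
            + Wh x lam * pd κ (fun y => pd lam (fun z => g z μ ν) y) x
            + pd κ (fun y => pd μ (fun z => Wh z lam) y) x * g x lam ν
            + pd μ (fun y => Wh y lam) x * pd κ (fun y => g y lam ν) x
            + pd κ (fun y => pd ν (fun z => Wh z lam) y) x * g x μ lam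
            + pd ν (fun y => Wh y lam) x * pd κ (fun y => g y μ lam) x) := by
      intro κ
      rw [pd_lieG hg hWh κ μ ν x, Finset.mul_sum]
    have eB : ∀ κ : Fin d, pd μ (fun y => W y κ) x * LieG g Wh κ ν x
        = ∑ lam, pd μ (fun y => W y κ) x * (Wh x lam * pd lam (fun y => g y κ ν) x
            + pd κ (fun y => Wh y lam) x * g x lam ν
            + pd ν (fun y => Wh y lam) x * g x κ lam) := by
      intro κ
      unfold LieG
      rw [← Finset.sum_add_distrib, ← Finset.sum_add_distrib, Finset.mul_sum]
    have eC : ∀ κ : Fin d, pd ν (fun y => W y κ) x * LieG g Wh μ κ x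
        = ∑ lam, pd ν (fun y => W y κ) x * (Wh x lam * pd lam (fun y => g y μ κ) x
            + pd μ (fun y => Wh y lam) x * g x lam κ
            + pd κ (fun y => Wh y lam) x * g x μ lam) := by
      intro κ
      unfold LieG
      rw [← Finset.sum_add_distrib, ← Finset.sum_add_distrib, Finset.mul_sum]
    rw [Finset.sum_congr rfl fun κ _ => eA κ, Finset.sum_congr rfl fun κ _ => eB κ,
      Finset.sum_congr rfl fun κ _ => eC κ]
    simp only [← Finset.sum_add_distrib]
  rw [hL, hRX X Xh hX hXh, hRX Xh X hXh hX, ← Finset.sum_sub_distrib]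
  simp only [← Finset.sum_sub_distrib]
  apply sum_sym
  intro κ lam
  simp only [pd_comm (hg μ ν) lam κ x,
    pd_comm (hXh lam) κ μ x, pd_comm (hXh lam) κ ν x,
    pd_comm (hXh κ) lam μ x, pd_comm (hXh κ) lam ν x,
    pd_comm (hX lam) κ μ x, pd_comm (hX lam) κ ν x,
    pd_comm (hX κ) lam μ x, pd_comm (hX κ) lam ν x]
  ring

lemma g_chr {g ginv : Pt d → Matrix (Fin d) (Fin d) ℝ}
    (hinv : ∀ x, g x * ginv x = 1) (x : Pt d) (ν μ α : Fin d) :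
    ∑ κ, g x ν κ * Chr g ginv κ μ α x
      = (1/2) * (pd μ (fun y => g y α ν) x + pd α (fun y => g y μ ν) x
          - pd ν (fun y => g y μ α) x) := by
  unfold Chr
  calc ∑ κ, g x ν κ * ((1 / 2) * ∑ β, ginv x κ β *
        (pd μ (fun y => g y α β) x + pd α (fun y => g y μ β) x - pd β (fun y => g y μ α) x))
      = ∑ κ, ∑ β, (g x ν κ * ginv x κ β) * ((1/2) *
        (pd μ (fun y => g y α β) x + pd α (fun y => g y μ β) x - pd β (fun y => g y μ α) x)) := by
        refine Finset.sum_congr rfl fun κ _ => ?_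
        rw [Finset.mul_sum, Finset.mul_sum]
        exact Finset.sum_congr rfl fun β _ => by ring
    _ = ∑ β, (∑ κ, g x ν κ * ginv x κ β) * ((1/2) *
        (pd μ (fun y => g y α β) x + pd α (fun y => g y μ β) x - pd β (fun y => g y μ α) x)) := by
        rw [Finset.sum_comm]
        exact Finset.sum_congr rfl fun β _ => (Finset.sum_mul _ _ _).symm
    _ = ∑ β, (if ν = β then 1 else 0) * ((1/2) *
        (pd μ (fun y => g y α β) x + pd α (fun y => g y μ β) x - pd β (fun y => g y μ α) x)) := by
        exact Finset.sum_congr rfl fun β _ => by rw [g_ginv hinv x ν β]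
    _ = (1/2) * (pd μ (fun y => g y α ν) x + pd α (fun y => g y μ ν) x
          - pd ν (fun y => g y μ α) x) := by simp

lemma covD1_lower_covDvec {g ginv : Pt d → Matrix (Fin d) (Fin d) ℝ}
    (hg : ∀ μ ν, ContDiff ℝ (⊤ : ℕ∞) fun x => g x μ ν)
    (hsymm : ∀ x μ ν, g x μ ν = g x ν μ)
    (hinv : ∀ x, g x * ginv x = 1)
    {V : Pt d → Fin d → ℝ} (hV : ∀ κ, ContDiff ℝ (⊤ : ℕ∞) fun x => V x κ)
    (x : Pt d) (μ ν : Fin d) :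
    covD1 g ginv (lowerIdx g V) μ ν x = ∑ κ, g x ν κ * covDvec g ginv V μ κ x := by
  have hpdsym : ∀ (i p q : Fin d), pd i (fun y => g y p q) x = pd i (fun y => g y q p) x := by
    intro i p q
    congr 1
    funext y
    exact hsymm y p q
  have hR : ∑ κ, g x ν κ * covDvec g ginv V μ κ x
      = ∑ κ, (g x ν κ * pd μ (fun y => V y κ) x
          + (1/2) * (pd μ (fun y => g y κ ν) x + pd κ (fun y => g y μ ν) x
              - pd ν (fun y => g y μ κ) x) * V x κ) := by
    unfold covDvec
    have e1 : ∑ κ, g x ν κ * (pd μ (fun y => V y κ) x + ∑ α, Chr g ginv κ μ α x * V x α)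
        = (∑ κ, g x ν κ * pd μ (fun y => V y κ) x)
          + ∑ κ, ∑ α, g x ν κ * (Chr g ginv κ μ α x * V x α) := by
      rw [← Finset.sum_add_distrib]
      exact Finset.sum_congr rfl fun κ _ => by rw [mul_add, Finset.mul_sum]
    rw [e1]
    have e2 : ∑ κ, ∑ α, g x ν κ * (Chr g ginv κ μ α x * V x α)
        = ∑ α, (1/2) * (pd μ (fun y => g y α ν) x + pd α (fun y => g y μ ν) x
            - pd ν (fun y => g y μ α) x) * V x α := by
      rw [Finset.sum_comm]
      refine Finset.sum_congr rfl fun α _ => ?_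
      calc ∑ κ, g x ν κ * (Chr g ginv κ μ α x * V x α)
          = (∑ κ, g x ν κ * Chr g ginv κ μ α x) * V x α := by
            rw [Finset.sum_mul]
            exact Finset.sum_congr rfl fun κ _ => by ring
        _ = (1/2) * (pd μ (fun y => g y α ν) x + pd α (fun y => g y μ ν) x
            - pd ν (fun y => g y μ α) x) * V x α := by rw [g_chr hinv x ν μ α]
    rw [e2, ← Finset.sum_add_distrib]
  rw [hR, covD1_lower_expand hg hsymm hinv hV x μ ν]
  refine Finset.sum_congr rfl fun κ _ => ?_
  rw [hpdsym μ ν κ, hpdsym ν μ κ]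
  ring

lemma trace_covD1 {g ginv : Pt d → Matrix (Fin d) (Fin d) ℝ}
    (hg : ∀ μ ν, ContDiff ℝ (⊤ : ℕ∞) fun x => g x μ ν)
    (hsymm : ∀ x μ ν, g x μ ν = g x ν μ)
    (hinv : ∀ x, g x * ginv x = 1)
    {V : Pt d → Fin d → ℝ} (hV : ∀ κ, ContDiff ℝ (⊤ : ℕ∞) fun x => V x κ)
    (x : Pt d) :
    ∑ μ, ∑ ν, ginv x μ ν * covD1 g ginv (lowerIdx g V) μ ν x = divg g ginv V x := by
  unfold divg
  refine Finset.sum_congr rfl fun μ _ => ?_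
  calc ∑ ν, ginv x μ ν * covD1 g ginv (lowerIdx g V) μ ν x
      = ∑ ν, ∑ κ, ginv x μ ν * (g x ν κ * covDvec g ginv V μ κ x) := by
        refine Finset.sum_congr rfl fun ν _ => ?_
        rw [covD1_lower_covDvec hg hsymm hinv hV x μ ν, Finset.mul_sum]
    _ = ∑ κ, (∑ ν, ginv x μ ν * g x ν κ) * covDvec g ginv V μ κ x := by
        rw [Finset.sum_comm]
        refine Finset.sum_congr rfl fun κ _ => ?_
        rw [Finset.sum_mul]
        exact Finset.sum_congr rfl fun ν _ => by ring
    _ = ∑ κ, (if μ = κ then 1 else 0) * covDvec g ginv V μ κ x :=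
        Finset.sum_congr rfl fun κ _ => by rw [ginv_g hinv x μ κ]
    _ = covDvec g ginv V μ μ x := by simp

lemma trace_g {g ginv : Pt d → Matrix (Fin d) (Fin d) ℝ}
    (hsymm : ∀ x μ ν, g x μ ν = g x ν μ)
    (hinv : ∀ x, g x * ginv x = 1) (x : Pt d) :
    ∑ μ, ∑ ν, ginv x μ ν * g x μ ν = (d : ℝ) := by
  have : ∀ μ : Fin d, ∑ ν, ginv x μ ν * g x μ ν = 1 := by
    intro μ
    calc ∑ ν, ginv x μ ν * g x μ ν = ∑ ν, ginv x μ ν * g x ν μ :=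
        Finset.sum_congr rfl fun ν _ => by rw [hsymm x μ ν]
      _ = if μ = μ then 1 else 0 := ginv_g hinv x μ μ
      _ = 1 := by simp
  simp [this]

end UKHelpers

/-- solutions of the unphysical Killing equations form a Lie algebra:
the Lie bracket of two solutions is again a solution, with conformal factor
`Y' = X^κ ∇_κ Ŷ - X̂^κ ∇_κ Y`. -/
theorem unphysical_killing_lie_algebra {d : ℕ} (hd : 0 < d)
    (g ginv : Pt d → Matrix (Fin d) (Fin d) ℝ)
    (hg : ∀ μ ν, ContDiff ℝ (⊤ : ℕ∞) fun x => g x μ ν)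
    (hginv : ∀ μ ν, ContDiff ℝ (⊤ : ℕ∞) fun x => ginv x μ ν)
    (hsymm : ∀ x μ ν, g x μ ν = g x ν μ)
    (hinv : ∀ x, g x * ginv x = 1)
    (Θ : Pt d → ℝ) (hΘ : ContDiff ℝ (⊤ : ℕ∞) Θ)
    (X Xh : Pt d → Fin d → ℝ) (Y Yh : Pt d → ℝ)
    (hX : ∀ κ, ContDiff ℝ (⊤ : ℕ∞) fun x => X x κ) (hXh : ∀ κ, ContDiff ℝ (⊤ : ℕ∞) fun x => Xh x κ)
    (hY : ContDiff ℝ (⊤ : ℕ∞) Y) (hYh : ContDiff ℝ (⊤ : ℕ∞) Yh)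
    (hCKV : ∀ x μ ν, covD1 g ginv (lowerIdx g X) μ ν x + covD1 g ginv (lowerIdx g X) ν μ x
        = 2 * Y x * g x μ ν)
    (hYdiv : ∀ x, Y x = (1 / (d : ℝ)) * divg g ginv X x)
    (hXΘ : ∀ x, (∑ κ, X x κ * pd κ Θ x) = Θ x * Y x)
    (hCKVh : ∀ x μ ν, covD1 g ginv (lowerIdx g Xh) μ ν x + covD1 g ginv (lowerIdx g Xh) ν μ x
        = 2 * Yh x * g x μ ν)
    (hYhdiv : ∀ x, Yh x = (1 / (d : ℝ)) * divg g ginv Xh x)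
    (hXhΘ : ∀ x, (∑ κ, Xh x κ * pd κ Θ x) = Θ x * Yh x) :
    (∀ x μ ν,
        covD1 g ginv (lowerIdx g (fun y => vbracket X Xh y)) μ ν x
            + covD1 g ginv (lowerIdx g (fun y => vbracket X Xh y)) ν μ x
          = 2 * ((∑ κ, X x κ * pd κ Yh x) - ∑ κ, Xh x κ * pd κ Y x) * g x μ ν)
      ∧ (∀ x, (∑ κ, X x κ * pd κ Yh x) - (∑ κ, Xh x κ * pd κ Y x)
          = (1 / (d : ℝ)) * divg g ginv (fun y => vbracket X Xh y) x)
      ∧ ∀ x, (∑ κ, vbracket X Xh x κ * pd κ Θ x)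
          = Θ x * ((∑ κ, X x κ * pd κ Yh x) - ∑ κ, Xh x κ * pd κ Y x) := by
  have hB : ∀ κ, ContDiff ℝ (⊤ : ℕ∞) fun x => vbracket X Xh x κ := contDiff_vbracket hX hXh
  have hLX : ∀ y a b, LieG g X a b y = 2 * Y y * g y a b := fun y a b =>
    (lieG_eq hg hsymm hinv hX y a b).symm.trans (hCKV y a b)
  have hLXh : ∀ y a b, LieG g Xh a b y = 2 * Yh y * g y a b := fun y a b =>
    (lieG_eq hg hsymm hinv hXh y a b).symm.trans (hCKVh y a b)
  have part1 : ∀ x μ ν,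
      covD1 g ginv (lowerIdx g (fun y => vbracket X Xh y)) μ ν x
          + covD1 g ginv (lowerIdx g (fun y => vbracket X Xh y)) ν μ x
        = 2 * ((∑ κ, X x κ * pd κ Yh x) - ∑ κ, Xh x κ * pd κ Y x) * g x μ ν := by
    intro x μ ν
    rw [lieG_eq hg hsymm hinv hB x μ ν, lieG_bracket hg hX hXh x μ ν]
    have e1 : ∀ (W : Pt d → Fin d → ℝ) (Z : Pt d → ℝ),
        (∀ y a b, LieG g W a b y = 2 * Z y * g y a b) → ContDiff ℝ (⊤ : ℕ∞) Z →
        ∀ κ : Fin d, pd κ (fun y => LieG g W μ ν y) x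
          = 2 * (pd κ Z x * g x μ ν + Z x * pd κ (fun y => g y μ ν) x) := by
      intro W Z hLW hZ κ
      have hfun : (fun y => LieG g W μ ν y) = fun y => 2 * (Z y * g y μ ν) :=
        funext fun y => by rw [hLW y μ ν]; ring
      rw [hfun, pd_const_mul (dA (hZ.mul (hg μ ν)) x) 2 κ,
        pd_mul (dA hZ x) (dA (hg μ ν) x) κ]
    have t1 : ∑ κ, X x κ * pd κ (fun y => LieG g Xh μ ν y) x
        = 2 * g x μ ν * (∑ κ, X x κ * pd κ Yh x)
          + 2 * Yh x * ∑ κ, X x κ * pd κ (fun y => g y μ ν) x := by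
      rw [Finset.mul_sum, Finset.mul_sum, ← Finset.sum_add_distrib]
      refine Finset.sum_congr rfl fun κ _ => ?_
      rw [e1 Xh Yh hLXh hYh κ]; ring
    have t4 : ∑ κ, Xh x κ * pd κ (fun y => LieG g X μ ν y) x
        = 2 * g x μ ν * (∑ κ, Xh x κ * pd κ Y x)
          + 2 * Y x * ∑ κ, Xh x κ * pd κ (fun y => g y μ ν) x := by
      rw [Finset.mul_sum, Finset.mul_sum, ← Finset.sum_add_distrib]
      refine Finset.sum_congr rfl fun κ _ => ?_
      rw [e1 X Y hLX hY κ]; ring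
    have t2 : ∑ κ, pd μ (fun y => X y κ) x * LieG g Xh κ ν x
        = 2 * Yh x * ∑ κ, pd μ (fun y => X y κ) x * g x κ ν := by
      rw [Finset.mul_sum]
      refine Finset.sum_congr rfl fun κ _ => ?_
      rw [hLXh x κ ν]; ring
    have t3 : ∑ κ, pd ν (fun y => X y κ) x * LieG g Xh μ κ x
        = 2 * Yh x * ∑ κ, pd ν (fun y => X y κ) x * g x μ κ := by
      rw [Finset.mul_sum]
      refine Finset.sum_congr rfl fun κ _ => ?_
      rw [hLXh x μ κ]; ring
    have t5 : ∑ κ, pd μ (fun y => Xh y κ) x * LieG g X κ ν x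
        = 2 * Y x * ∑ κ, pd μ (fun y => Xh y κ) x * g x κ ν := by
      rw [Finset.mul_sum]
      refine Finset.sum_congr rfl fun κ _ => ?_
      rw [hLX x κ ν]; ring
    have t6 : ∑ κ, pd ν (fun y => Xh y κ) x * LieG g X μ κ x
        = 2 * Y x * ∑ κ, pd ν (fun y => Xh y κ) x * g x μ κ := by
      rw [Finset.mul_sum]
      refine Finset.sum_congr rfl fun κ _ => ?_
      rw [hLX x μ κ]; ring
    rw [t1, t2, t3, t4, t5, t6]
    have hX1 := hLX x μ ν
    have hXh1 := hLXh x μ ν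
    unfold LieG at hX1 hXh1
    linear_combination 2 * Yh x * hX1 - 2 * Y x * hXh1
  have part2 : ∀ x, (∑ κ, X x κ * pd κ Yh x) - (∑ κ, Xh x κ * pd κ Y x)
      = (1 / (d : ℝ)) * divg g ginv (fun y => vbracket X Xh y) x := by
    intro x
    have htr : ∑ μ, ∑ ν, ginv x μ ν *
        (covD1 g ginv (lowerIdx g (fun y => vbracket X Xh y)) μ ν x
          + covD1 g ginv (lowerIdx g (fun y => vbracket X Xh y)) ν μ x)
        = ∑ μ, ∑ ν, ginv x μ ν *
            (2 * ((∑ κ, X x κ * pd κ Yh x) - ∑ κ, Xh x κ * pd κ Y x) * g x μ ν) :=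
      Finset.sum_congr rfl fun μ _ => Finset.sum_congr rfl fun ν _ => by rw [part1 x μ ν]
    have hsplit : ∑ μ, ∑ ν, ginv x μ ν *
        (covD1 g ginv (lowerIdx g (fun y => vbracket X Xh y)) μ ν x
          + covD1 g ginv (lowerIdx g (fun y => vbracket X Xh y)) ν μ x)
        = (∑ μ, ∑ ν, ginv x μ ν *
            covD1 g ginv (lowerIdx g (fun y => vbracket X Xh y)) μ ν x)
          + ∑ μ, ∑ ν, ginv x μ ν *
            covD1 g ginv (lowerIdx g (fun y => vbracket X Xh y)) ν μ x := by
      simp only [mul_add, Finset.sum_add_distrib]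
    have hL1 : ∑ μ, ∑ ν, ginv x μ ν *
        covD1 g ginv (lowerIdx g (fun y => vbracket X Xh y)) μ ν x
        = divg g ginv (fun y => vbracket X Xh y) x := trace_covD1 hg hsymm hinv hB x
    have hL2 : ∑ μ, ∑ ν, ginv x μ ν *
        covD1 g ginv (lowerIdx g (fun y => vbracket X Xh y)) ν μ x
        = divg g ginv (fun y => vbracket X Xh y) x := by
      rw [Finset.sum_comm]
      calc ∑ ν, ∑ μ, ginv x μ ν *
            covD1 g ginv (lowerIdx g (fun y => vbracket X Xh y)) ν μ x
          = ∑ ν, ∑ μ, ginv x ν μ *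
            covD1 g ginv (lowerIdx g (fun y => vbracket X Xh y)) ν μ x :=
            Finset.sum_congr rfl fun ν _ => Finset.sum_congr rfl fun μ _ => by
              rw [ginv_symm hsymm hinv x μ ν]
        _ = divg g ginv (fun y => vbracket X Xh y) x := trace_covD1 hg hsymm hinv hB x
    have hRtr : ∑ μ, ∑ ν, ginv x μ ν *
        (2 * ((∑ κ, X x κ * pd κ Yh x) - ∑ κ, Xh x κ * pd κ Y x) * g x μ ν)
        = 2 * ((∑ κ, X x κ * pd κ Yh x) - ∑ κ, Xh x κ * pd κ Y x) * (d : ℝ) := by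
      calc ∑ μ, ∑ ν, ginv x μ ν *
            (2 * ((∑ κ, X x κ * pd κ Yh x) - ∑ κ, Xh x κ * pd κ Y x) * g x μ ν)
          = ∑ μ, ∑ ν, 2 * ((∑ κ, X x κ * pd κ Yh x) - ∑ κ, Xh x κ * pd κ Y x)
              * (ginv x μ ν * g x μ ν) :=
            Finset.sum_congr rfl fun μ _ => Finset.sum_congr rfl fun ν _ => by ring
        _ = 2 * ((∑ κ, X x κ * pd κ Yh x) - ∑ κ, Xh x κ * pd κ Y x)
              * ∑ μ, ∑ ν, ginv x μ ν * g x μ ν := by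
            rw [Finset.mul_sum]
            exact Finset.sum_congr rfl fun μ _ => (Finset.mul_sum _ _ _).symm
        _ = 2 * ((∑ κ, X x κ * pd κ Yh x) - ∑ κ, Xh x κ * pd κ Y x) * (d : ℝ) := by
            rw [trace_g hsymm hinv x]
    have hdne : (d : ℝ) ≠ 0 := Nat.cast_ne_zero.mpr hd.ne'
    have hkey : 2 * divg g ginv (fun y => vbracket X Xh y) x
        = 2 * ((∑ κ, X x κ * pd κ Yh x) - ∑ κ, Xh x κ * pd κ Y x) * (d : ℝ) := by
      linarith [htr, hsplit, hL1, hL2, hRtr]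
    field_simp
    linarith [hkey]
  have part3 : ∀ x, (∑ κ, vbracket X Xh x κ * pd κ Θ x)
      = Θ x * ((∑ κ, X x κ * pd κ Yh x) - ∑ κ, Xh x κ * pd κ Y x) := by
    intro x
    have key : ∀ (W : Pt d → Fin d → ℝ), (∀ κ, ContDiff ℝ (⊤ : ℕ∞) fun x => W x κ) →
        ∀ (Z : Pt d → ℝ), ContDiff ℝ (⊤ : ℕ∞) Z →
        (∀ y, (∑ κ, W y κ * pd κ Θ y) = Θ y * Z y) →
        ∀ lam : Fin d,
          ∑ κ, (pd lam (fun y => W y κ) x * pd κ Θ x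
              + W x κ * pd lam (fun y => pd κ Θ y) x)
            = pd lam Θ x * Z x + Θ x * pd lam Z x := by
      intro W hW Z hZ hcon lam
      have h1 : ∀ κ : Fin d, DifferentiableAt ℝ (fun y => W y κ * pd κ Θ y) x :=
        fun κ => dA ((hW κ).mul (contDiff_pd hΘ κ)) x
      calc ∑ κ, (pd lam (fun y => W y κ) x * pd κ Θ x
              + W x κ * pd lam (fun y => pd κ Θ y) x)
          = ∑ κ, pd lam (fun y => W y κ * pd κ Θ y) x :=
            Finset.sum_congr rfl fun κ _ =>
              (pd_mul (dA (hW κ) x) (dA (contDiff_pd hΘ κ) x) lam).symm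
        _ = pd lam (fun y => ∑ κ, W y κ * pd κ Θ y) x := (pd_sum (fun κ _ => h1 κ) lam).symm
        _ = pd lam (fun y => Θ y * Z y) x := by
            congr 1
            funext y
            exact hcon y
        _ = pd lam Θ x * Z x + Θ x * pd lam Z x := pd_mul (dA hΘ x) (dA hZ x) lam
    have hmulsum : ∀ (V W : Pt d → Fin d → ℝ) (hW : ∀ κ, ContDiff ℝ (⊤ : ℕ∞) fun x => W x κ)
        (Z : Pt d → ℝ) (hZ : ContDiff ℝ (⊤ : ℕ∞) Z)
        (hcon : ∀ y, (∑ κ, W y κ * pd κ Θ y) = Θ y * Z y),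
        (∑ lam, ∑ κ, V x lam * (pd lam (fun y => W y κ) x * pd κ Θ x))
          + (∑ lam, ∑ κ, V x lam * (W x κ * pd lam (fun y => pd κ Θ y) x))
          = (∑ lam, V x lam * pd lam Θ x) * Z x + Θ x * ∑ lam, V x lam * pd lam Z x := by
      intro V W hW Z hZ hcon
      have e1 : ∀ lam : Fin d, V x lam * (pd lam Θ x * Z x + Θ x * pd lam Z x)
          = (∑ κ, V x lam * (pd lam (fun y => W y κ) x * pd κ Θ x))
            + ∑ κ, V x lam * (W x κ * pd lam (fun y => pd κ Θ y) x) := by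
        intro lam
        rw [← Finset.sum_add_distrib]
        calc V x lam * (pd lam Θ x * Z x + Θ x * pd lam Z x)
            = V x lam * ∑ κ, (pd lam (fun y => W y κ) x * pd κ Θ x
                + W x κ * pd lam (fun y => pd κ Θ y) x) := by
              rw [key W hW Z hZ hcon lam]
          _ = ∑ κ, (V x lam * (pd lam (fun y => W y κ) x * pd κ Θ x)
                + V x lam * (W x κ * pd lam (fun y => pd κ Θ y) x)) := by
              rw [Finset.mul_sum]
              exact Finset.sum_congr rfl fun κ _ => by ring
      calc (∑ lam, ∑ κ, V x lam * (pd lam (fun y => W y κ) x * pd κ Θ x))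
            + (∑ lam, ∑ κ, V x lam * (W x κ * pd lam (fun y => pd κ Θ y) x))
          = ∑ lam, V x lam * (pd lam Θ x * Z x + Θ x * pd lam Z x) := by
            rw [← Finset.sum_add_distrib]
            exact (Finset.sum_congr rfl fun lam _ => (e1 lam).symm).symm ▸ rfl
        _ = (∑ lam, V x lam * pd lam Θ x) * Z x + Θ x * ∑ lam, V x lam * pd lam Z x := by
            rw [Finset.sum_mul, Finset.mul_sum, ← Finset.sum_add_distrib]
            exact Finset.sum_congr rfl fun lam _ => by ring
    have hA := hmulsum X Xh hXh Yh hYh hXhΘ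
    have hBb := hmulsum Xh X hX Y hY hXΘ
    have hC : ∑ lam, ∑ κ, X x lam * (Xh x κ * pd lam (fun y => pd κ Θ y) x)
        = ∑ lam, ∑ κ, Xh x lam * (X x κ * pd lam (fun y => pd κ Θ y) x) := by
      apply sum_sym
      intro κ lam
      rw [pd_comm hΘ κ lam x]
      ring
    have hexp : ∑ κ, vbracket X Xh x κ * pd κ Θ x
        = (∑ lam, ∑ κ, X x lam * (pd lam (fun y => Xh y κ) x * pd κ Θ x))
          - ∑ lam, ∑ κ, Xh x lam * (pd lam (fun y => X y κ) x * pd κ Θ x) := by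
      calc ∑ κ, vbracket X Xh x κ * pd κ Θ x
          = ∑ κ, ∑ lam, (X x lam * (pd lam (fun y => Xh y κ) x * pd κ Θ x)
              - Xh x lam * (pd lam (fun y => X y κ) x * pd κ Θ x)) := by
            refine Finset.sum_congr rfl fun κ _ => ?_
            unfold vbracket
            rw [sub_mul, Finset.sum_mul, Finset.sum_mul, ← Finset.sum_sub_distrib]
            exact Finset.sum_congr rfl fun lam _ => by ring
        _ = ∑ lam, ∑ κ, (X x lam * (pd lam (fun y => Xh y κ) x * pd κ Θ x)
              - Xh x lam * (pd lam (fun y => X y κ) x * pd κ Θ x)) := Finset.sum_comm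
        _ = (∑ lam, ∑ κ, X x lam * (pd lam (fun y => Xh y κ) x * pd κ Θ x))
              - ∑ lam, ∑ κ, Xh x lam * (pd lam (fun y => X y κ) x * pd κ Θ x) := by
            simp only [Finset.sum_sub_distrib]
    rw [hXΘ x] at hA
    rw [hXhΘ x] at hBb
    linarith [hA, hBb, hC, hexp]
  exact ⟨part1, part2, part3⟩
end
end
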